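/- arXiv:1703.01080 — 11 statements merged into one kernel-verified Lean document; each statement's English description precedes it below -/
import Mathlib

section
/- Let A be a finite abelian group and f : A → ℂ a nonzero function. Then |supp(f)| · |supp(f̂)| ≥ |A|, where f̂ is the Fourier transform of f on the dual group of A. -/
/-!
Characters have modulus one, so a sum `∑ i, g i * u i` with `‖u i‖ ≤ 1` and `‖g i‖ ≤ M` has norm
at most `|supp g| M`. Applied to the definition of `f̂`, this bounds every Fourier coefficient by
`|supp f| M / |A|`, where `M = max ‖f‖`; applied to Fourier inversion at a point where `‖f‖ = M`,
it gives `M ≤ |supp f̂| |supp f| M / |A|`.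
-/

open Finset Function

section SupportBound

variable {ι R : Type*} [Fintype ι] [SeminormedRing R]

theorem norm_sum_mul_le_ncard_support_mul (g u : ι → R) {M : ℝ} (hg : ∀ i, ‖g i‖ ≤ M)
    (hu : ∀ i, ‖u i‖ ≤ 1) : ‖∑ i, g i * u i‖ ≤ (support g).ncard * M := by
  classical
  have hsum : ∑ i, g i * u i = ∑ i ∈ univ.filter (g · ≠ 0), g i * u i := by
    rw [sum_filter_of_ne]
    intro i _ hi h
    simp [h] at hi
  have hcard : (support g).ncard = (univ.filter (g · ≠ 0)).card := by
    rw [← Set.ncard_coe_finset, coe_filter_univ]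
    rfl
  rw [hsum, hcard, ← nsmul_eq_mul]
  refine (norm_sum_le _ _).trans (sum_le_card_nsmul _ _ _ fun i _ => ?_)
  calc ‖g i * u i‖ ≤ ‖g i‖ * ‖u i‖ := norm_mul_le _ _
    _ ≤ ‖g i‖ := mul_le_of_le_one_right (norm_nonneg _) (hu i)
    _ ≤ M := hg i

end SupportBound

namespace AddChar

variable {A : Type*} [AddCommGroup A] [Fintype A]

noncomputable def fourierTransform (f : A → ℂ) (ψ : AddChar A ℂ) : ℂ :=
  (∑ a, f a * starRingEnd ℂ (ψ a)) / Fintype.card A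

theorem sum_fourierTransform_mul_apply (f : A → ℂ) (a : A) :
    ∑ ψ : AddChar A ℂ, fourierTransform f ψ * ψ a = f a := by
  classical
  have hN : (Fintype.card A : ℂ) ≠ 0 := Nat.cast_ne_zero.2 Fintype.card_ne_zero
  calc ∑ ψ : AddChar A ℂ, fourierTransform f ψ * ψ a
      = (∑ b, f b * ∑ ψ : AddChar A ℂ, ψ (a - b)) / Fintype.card A := by
        simp only [fourierTransform, div_mul_eq_mul_div, ← sum_div, sum_mul, mul_sum]
        rw [sum_comm]
        simp only [mul_assoc, ← map_neg_eq_conj, ← map_add_eq_mul, neg_add_eq_sub]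
    _ = f a := by
        simp only [sum_apply_eq_ite, sub_eq_zero, mul_ite, mul_zero, sum_ite_eq,
          mem_univ, if_true, mul_div_cancel_right₀ _ hN]

theorem norm_fourierTransform_le (f : A → ℂ) {M : ℝ} (hf : ∀ a, ‖f a‖ ≤ M)
    (ψ : AddChar A ℂ) :
    ‖fourierTransform f ψ‖ ≤ (support f).ncard * M / Fintype.card A := by
  rw [fourierTransform, norm_div, Complex.norm_natCast]
  gcongr
  exact norm_sum_mul_le_ncard_support_mul _ _ hf fun a => by simp

theorem norm_apply_le_ncard_support_fourierTransform_mul (f : A → ℂ) {M : ℝ}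
    (hf : ∀ ψ, ‖fourierTransform f ψ‖ ≤ M) (a : A) :
    ‖f a‖ ≤ (support (fourierTransform f)).ncard * M := by
  rw [← sum_fourierTransform_mul_apply f a]
  exact norm_sum_mul_le_ncard_support_mul _ _ hf fun ψ => (norm_apply ψ a).le

end AddChar

open AddChar in
/-- Donoho–Stark uncertainty principle: for a finite abelian group `A` and a nonzero
function `f : A → ℂ`, we have `|supp f| * |supp f̂| ≥ |A|`, where
`f̂(χ) = (1/|A|) ∑ a, f a * conj (χ a)` is the Fourier transform on the dual group. -/
theorem donoho_stark (A : Type*) [AddCommGroup A] [Fintype A] (f : A → ℂ) (hf : f ≠ 0) :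
    Fintype.card A ≤
      (Function.support f).ncard *
      (Function.support (fun χ : AddChar A ℂ =>
        (∑ a : A, f a * (starRingEnd ℂ) (χ a)) / (Fintype.card A : ℂ))).ncard := by
  change _ ≤ (support f).ncard * (support (fourierTransform f)).ncard
  obtain ⟨a₀, ha₀⟩ := Finite.exists_max (‖f ·‖)
  have hM : 0 < ‖f a₀‖ := by
    obtain ⟨a, ha⟩ := Function.ne_iff.1 hf
    exact (norm_pos_iff.2 ha).trans_le (ha₀ a)
  have hN : (0 : ℝ) < Fintype.card A := Nat.cast_pos.2 Fintype.card_pos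
  have hbound := norm_apply_le_ncard_support_fourierTransform_mul f
    (norm_fourierTransform_le f ha₀) a₀
  rw [mul_div_assoc', le_div_iff₀ hN] at hbound
  have hcard : (Fintype.card A : ℝ) ≤ (support f).ncard * (support (fourierTransform f)).ncard :=
    le_of_mul_le_mul_left (by linarith) hM
  exact_mod_cast hcard
end

section
/- Let p be a prime and f : Z/pZ → ℂ a nonzero function. Then |supp(f)| + |supp(f̂)| ≥ p + 1. -/
/-!
By Chebotarev's theorem every square minor `det (ζ ^ (αᵢ * βⱼ))` of the Fourier matrix of
`ZMod p` is nonzero. Write the generalized Vandermonde determinant `det (Xᵢ ^ bⱼ)` as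
`V(X) * Q(X)`, where `V` is the Vandermonde determinant. Substituting `Xᵢ = tⁱ` turns both
determinants into Vandermonde determinants in powers of `t`; cancelling the common power of
`t - 1` and evaluating at `t = 1` shows that `Q(1, …, 1)` divides `∏ (bⱼ - bᵢ)`, which is prime
to `p`. If the minor vanished, then `Q(ζ ^ α₁, …, ζ ^ αₖ) = 0` because the Vandermonde factor
does not, so the cyclotomic polynomial `Φ_p` divides `Q(t ^ α₁, …, t ^ αₖ)` and `p = Φ_p(1)`
divides `Q(1, …, 1)`.

If `|supp f| + |supp f̂| ≤ p`, pick `|supp f|` zeros of `f̂`: the values of `f` on its support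
form a kernel vector of such a minor, hence vanish.
-/

open Finset Matrix

theorem Matrix.dvd_det_of_forall_dvd_sub {R n : Type*} [CommRing R] [Fintype n] [DecidableEq n]
    (M : Matrix n n R) {i j : n} (hij : i ≠ j) {d : R} (h : ∀ m, d ∣ M i m - M j m) :
    d ∣ M.det := by
  choose c hc using h
  have hrow : M i + (-1 : R) • M j = d • c := funext fun m => by
    simp [← hc, sub_eq_add_neg]
  rw [← det_updateRow_add_smul_self M hij (-1), hrow, det_updateRow_smul]
  exact dvd_mul_right _ _

namespace Polynomial

variable {R : Type*} [CommRing R]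

theorem exists_X_pow_sub_X_pow_eq (m n : ℕ) :
    ∃ g : R[X], X ^ m - X ^ n = (X - 1) * g ∧ g.eval 1 = (m : R) - n :=
  ⟨∑ l ∈ range m, X ^ l - ∑ l ∈ range n, X ^ l,
    by rw [mul_sub, mul_comm, geom_sum_mul, mul_comm, geom_sum_mul]; ring, by simp⟩

theorem exists_prod_X_pow_sub_X_pow_eq {k : ℕ} (γ : Fin k → ℕ) :
    ∃ g : R[X], ∏ i, ∏ j ∈ Ioi i, (X ^ γ j - X ^ γ i) = (X - 1) ^ (∑ i : Fin k, #(Ioi i)) * g ∧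
      g.eval 1 = ∏ i, ∏ j ∈ Ioi i, ((γ j : R) - γ i) := by
  choose g hg hg1 using fun i j : Fin k => exists_X_pow_sub_X_pow_eq (R := R) (γ j) (γ i)
  refine ⟨∏ i, ∏ j ∈ Ioi i, g i j, ?_, by simp [eval_prod, hg1]⟩
  simp_rw [hg, prod_mul_distrib, prod_const, prod_pow_eq_pow_sum]

end Polynomial

open Polynomial in
theorem IsPrimitiveRoot.prime_dvd_eval_one {K : Type*} [Field K] [CharZero K] {p : ℕ}
    [Fact p.Prime] {ζ : K} (hζ : IsPrimitiveRoot ζ p) {z : ℤ[X]} (hz : aeval ζ z = 0) :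
    (p : ℤ) ∣ z.eval 1 := by
  have hp := (Fact.out : p.Prime).pos
  have := minpoly.isIntegrallyClosed_dvd (hζ.isIntegral hp) hz
  rw [← cyclotomic_eq_minpoly hζ hp] at this
  simpa [eval_one_cyclotomic_prime] using eval_dvd (x := 1) this

namespace MvPolynomial

section Domain

variable {σ R : Type*} [CommRing R] [IsDomain R]

theorem prime_X_sub_X {i j : σ} (hij : i ≠ j) : Prime (X i - X j : MvPolynomial σ R) := by
  classical
  let e := (renameEquiv R (Equiv.optionSubtypeNe i).symm).trans (optionEquivLeft R {k // k ≠ i})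
  have he : e (X i - X j) = Polynomial.X - Polynomial.C (X ⟨j, hij.symm⟩) := by
    simp [e, Equiv.optionSubtypeNe_symm_of_ne hij.symm]
  rw [← MulEquiv.prime_iff e.toMulEquiv]
  exact he ▸ Polynomial.prime_X_sub_C _

theorem rename_eq_of_X_sub_X_dvd [DecidableEq σ] {i j k l : σ} (hij : i ≠ j)
    (h : (X i - X j : MvPolynomial σ R) ∣ X k - X l) :
    Function.update id i j k = Function.update id i j l := by
  have := map_dvd (rename (R := R) (Function.update id i j)) h
  simp only [map_sub, rename_X, Function.update_self, Function.update_of_ne hij.symm, id,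
    sub_self, zero_dvd_iff, sub_eq_zero] at this
  exact X_injective this

theorem det_vandermonde_dvd_det_X_pow [UniqueFactorizationMonoid R] {n : ℕ} (b : Fin n → ℕ) :
    (vandermonde (X : Fin n → MvPolynomial (Fin n) R)).det ∣
      (of fun i j => (X i : MvPolynomial (Fin n) R) ^ b j).det := by
  rw [det_vandermonde, prod_sigma']
  refine Finset.prod_dvd_of_isRelPrime ?_ fun x hx => ?_
  · rintro ⟨i, j⟩ hij ⟨k, l⟩ hkl hne
    simp only [coe_sigma, coe_univ, Set.mem_sigma_iff, Set.mem_univ, coe_Ioi, Set.mem_Ioi,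
      true_and] at hij hkl
    refine ((prime_X_sub_X hij.ne').irreducible.dvd_or_isRelPrime).resolve_left fun hdvd => ?_
    have := rename_eq_of_X_sub_X_dvd hij.ne' hdvd
    simp only [Function.update_apply, id] at this
    simp only [ne_eq, Sigma.mk.inj_iff, heq_eq_eq] at hne
    split_ifs at this <;> omega
  · simp only [mem_sigma, mem_univ, mem_Ioi, true_and] at hx
    exact dvd_det_of_forall_dvd_sub _ hx.ne' fun m => sub_dvd_pow_sub_pow _ _ _

end Domain

open scoped Polynomial

variable {σ R A : Type*} [CommRing R] [CommRing A] [Algebra R A]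

theorem eval_one_aeval_X_pow (c : σ → ℕ) (Q : MvPolynomial σ R) :
    (aeval (fun i => (Polynomial.X : R[X]) ^ c i) Q).eval 1 = eval 1 Q := by
  induction Q using MvPolynomial.induction_on <;> simp_all

theorem aeval_aeval_X_pow (c : σ → ℕ) (Q : MvPolynomial σ R) (x : A) :
    Polynomial.aeval x (aeval (fun i => (Polynomial.X : R[X]) ^ c i) Q) =
      aeval (fun i => x ^ c i) Q := by
  induction Q using MvPolynomial.induction_on <;> simp_all

theorem aeval_det_X_pow {n : ℕ} (b : Fin n → ℕ) (x : Fin n → A) :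
    aeval x (of fun i j => (X i : MvPolynomial (Fin n) R) ^ b j).det =
      (of fun i j => x i ^ b j).det := by
  rw [AlgHom.map_det]
  congr
  ext
  simp

theorem aeval_det_vandermonde_X {n : ℕ} (x : Fin n → A) :
    aeval x (vandermonde (X : Fin n → MvPolynomial (Fin n) R)).det = (vandermonde x).det := by
  rw [AlgHom.map_det]
  congr
  ext
  simp

theorem eval_one_dvd_prod_sub {k : ℕ} (b : Fin k → ℕ) {Q : MvPolynomial (Fin k) ℤ}
    (hQ : (of fun i j => (X i : MvPolynomial (Fin k) ℤ) ^ b j).det = (vandermonde X).det * Q) :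
    eval 1 Q ∣ ∏ i, ∏ j ∈ Ioi i, ((b j : ℤ) - b i) := by
  obtain ⟨g, hg, hg1⟩ := Polynomial.exists_prod_X_pow_sub_X_pow_eq (R := ℤ) b
  obtain ⟨g₀, hg₀, -⟩ :=
    Polynomial.exists_prod_X_pow_sub_X_pow_eq (R := ℤ) (fun i : Fin k => (i : ℕ))
  have h := congrArg (aeval fun i : Fin k => (Polynomial.X : ℤ[X]) ^ (i : ℕ)) hQ
  have htr : (of fun i j : Fin k => ((Polynomial.X : ℤ[X]) ^ (i : ℕ)) ^ b j) =
      (vandermonde fun j => Polynomial.X ^ b j)ᵀ := by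
    ext
    simp [← pow_mul, mul_comm]
  rw [map_mul, aeval_det_X_pow, aeval_det_vandermonde_X, htr, det_transpose, det_vandermonde,
    det_vandermonde, hg, hg₀, mul_assoc] at h
  have := mul_left_cancel₀ (pow_ne_zero _ (Polynomial.X_sub_C_ne_zero 1)) h
  rw [← hg1, this, Polynomial.eval_mul, eval_one_aeval_X_pow]
  exact dvd_mul_left _ _

end MvPolynomial

open MvPolynomial in
theorem IsPrimitiveRoot.det_pow_val_mul_val_ne_zero {K : Type*} [Field K] [CharZero K] {p : ℕ}
    [Fact p.Prime] {ζ : K} (hζ : IsPrimitiveRoot ζ p) {k : ℕ} {α β : Fin k → ZMod p}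
    (hα : Function.Injective α) (hβ : Function.Injective β) :
    (of fun i j => ζ ^ ((α i).val * (β j).val)).det ≠ 0 := by
  intro hdet
  obtain ⟨Q, hQ⟩ := det_vandermonde_dvd_det_X_pow (R := ℤ) fun j => (β j).val
  have hζα : Function.Injective fun i => ζ ^ (α i).val :=
    fun i j h => hα (ZMod.val_injective p (hζ.pow_inj (ZMod.val_lt _) (ZMod.val_lt _) h))
  have hQζ : aeval (fun i => ζ ^ (α i).val) Q = 0 := by
    have h := congrArg (aeval fun i => ζ ^ (α i).val) hQ
    simp_rw [map_mul, aeval_det_X_pow, aeval_det_vandermonde_X, ← pow_mul, hdet] at h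
    exact (mul_eq_zero.mp h.symm).resolve_left (det_vandermonde_ne_zero_iff.mpr hζα)
  have hpQ : (p : ℤ) ∣ eval 1 Q := by
    rw [← eval_one_aeval_X_pow fun i => (α i).val]
    exact hζ.prime_dvd_eval_one (by rwa [aeval_aeval_X_pow])
  obtain ⟨i, -, j, hij, hpij⟩ :
      ∃ i ∈ univ, ∃ j ∈ Ioi i, (p : ℤ) ∣ ((β j).val : ℤ) - (β i).val := by
    simpa only [Prime.dvd_finsetProd_iff (Nat.prime_iff_prime_int.mp Fact.out)] using
      hpQ.trans (eval_one_dvd_prod_sub _ hQ)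
  refine (mem_Ioi.mp hij).ne' (hβ ?_)
  rw [← ZMod.intCast_eq_intCast_iff_dvd_sub] at hpij
  simpa using hpij.symm

theorem IsPrimitiveRoot.eq_zero_of_forall_sum_mul_pow_eq_zero {K : Type*} [Field K] [CharZero K]
    {p : ℕ} [Fact p.Prime] {ζ : K} (hζ : IsPrimitiveRoot ζ p) {f : ZMod p → K}
    {A B : Finset (ZMod p)} (hAB : #A = #B) (hf : ∀ a ∉ A, f a = 0)
    (hB : ∀ b ∈ B, ∑ a, f a * ζ ^ (a.val * b.val) = 0) : f = 0 := by
  set α : Fin #A → ZMod p := fun i => A.equivFin.symm i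
  set β : Fin #A → ZMod p := fun i => B.equivFin.symm (Fin.cast hAB i)
  have hα : Function.Injective α := Subtype.val_injective.comp A.equivFin.symm.injective
  have hβ : Function.Injective β :=
    Subtype.val_injective.comp (B.equivFin.symm.injective.comp (Fin.cast_injective hAB))
  set v : Fin #A → K := fun i => f (α i)
  have hv : v ᵥ* of (fun i j => ζ ^ ((α i).val * (β j).val)) = 0 := by
    ext j
    have hsum : ∑ a ∈ A, f a * ζ ^ (a.val * (β j).val) = ∑ a, f a * ζ ^ (a.val * (β j).val) :=
      sum_subset (subset_univ A) fun a _ ha => by simp [hf a ha]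
    rw [Pi.zero_apply, ← hB (β j) (B.equivFin.symm _).2, ← hsum, ← sum_coe_sort A,
      ← A.equivFin.symm.sum_comp]
    rfl
  have hv0 : v = 0 := by
    by_contra h
    exact hζ.det_pow_val_mul_val_ne_zero hα hβ (exists_vecMul_eq_zero_iff.mp ⟨v, h, hv⟩)
  funext a
  by_cases ha : a ∈ A
  · simpa [v, α] using congrFun hv0 (A.equivFin ⟨a, ha⟩)
  · exact hf a ha

open Function in
theorem IsPrimitiveRoot.add_one_le_ncard_support_add_ncard_support {K : Type*} [Field K]
    [CharZero K] {p : ℕ} [Fact p.Prime] {ζ : K} (hζ : IsPrimitiveRoot ζ p) {f : ZMod p → K}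
    (hf : f ≠ 0) :
    p + 1 ≤ (support f).ncard +
      (support fun b : ZMod p => ∑ a, f a * ζ ^ (a.val * b.val)).ncard := by
  classical
  set F := fun b : ZMod p => ∑ a, f a * ζ ^ (a.val * b.val)
  by_contra! h
  set A := (support f).toFinset
  have hZ : #A ≤ #(univ.filter (F · = 0)) := by
    have hcard := card_filter_add_card_filter_not (s := univ) (F · = 0)
    rw [Set.ncard_eq_toFinset_card', Set.ncard_eq_toFinset_card'] at h
    simp only [Set.toFinset_card, Fintype.card_ofFinset, mem_support, ne_eq, card_univ, ZMod.card,
      A] at h hcard ⊢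
    omega
  obtain ⟨B, hBZ, hB⟩ := exists_subset_card_eq hZ
  exact hf (hζ.eq_zero_of_forall_sum_mul_pow_eq_zero hB.symm (fun a ha => by simpa [A] using ha)
    fun b hb => (mem_filter.mp (hBZ hb)).2)

/-- Uncertainty principle for cyclic groups of prime order: for a nonzero `f : ℤ/pℤ → ℂ`,
`|supp f| + |supp f̂| ≥ p + 1`, where `f̂(χ) = (1/p) ∑ a, f a * conj (χ a)`. -/
theorem uncertainty_zmod (p : ℕ) [Fact p.Prime] (f : ZMod p → ℂ) (hf : f ≠ 0) :
    p + 1 ≤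
      (Function.support f).ncard +
      (Function.support (fun χ : AddChar (ZMod p) ℂ =>
        (∑ a : ZMod p, f a * (starRingEnd ℂ) (χ a)) / (p : ℂ))).ncard := by
  have hω := Complex.isPrimitiveRoot_exp p (NeZero.ne p)
  set ψ := AddChar.zmodChar p hω.pow_eq_one
  have hψ (a b : ZMod p) : starRingEnd ℂ (ψ.mulShift (-b) a) =
      Complex.exp (2 * Real.pi * Complex.I / p) ^ (a.val * b.val) := by
    rw [AddChar.mulShift_apply, neg_mul, AddChar.map_neg_eq_conj, Complex.conj_conj,
      ← AddChar.zmodChar_apply' hω.pow_eq_one, Nat.cast_mul, ZMod.natCast_zmod_val,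
      ZMod.natCast_zmod_val, mul_comm]
  refine (hω.add_one_le_ncard_support_add_ncard_support hf).trans (Nat.add_le_add_left ?_ _)
  refine Set.ncard_le_ncard_of_injOn (fun b => ψ.mulShift (-b)) (fun b hb => ?_) ?_
  · rw [Function.mem_support] at hb ⊢
    simp only [hψ]
    exact div_ne_zero hb (Nat.cast_ne_zero.mpr (NeZero.ne p))
  · intro b _ c _ h
    exact neg_injective (AddChar.to_mulShift_inj_of_isPrimitive
      (AddChar.zmodChar_primitive_of_primitive_root p hω) h)
end

section
/- Let p be a prime and f = Σ_{i=0}^{p-1} a_i X^i ∈ ℂ[X] a nonzero polynomial of degree < p. Let wt(f) = #{i : a_i ≠ 0} and Z(f) = the number of p-th roots of unity μ in ℂ with f(μ) = 0. Then Z(f) ≤ wt(f) - 1. -/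
open Polynomial Finset Matrix

/-!
If `f` had `k = wt(f)` distinct zeros `x_j` among the `p`-th roots of unity, its nonzero
coefficients would give a nonzero vector in the left kernel of the `k × k` matrix
`(x_j ^ a_i)`, where `a_i` are the exponents of `f`. This contradicts Chebotarëv's theorem:
for distinct `a_i, b_j < p` and `ζ` a primitive `p`-th root of unity, `det (ζ ^ (a_i b_j)) ≠ 0`.

For Chebotarëv's theorem write `X ^ b_j = 1 + (X - 1) g_j` with `g_j = 1 + X + ⋯ + X ^ (b_j - 1)`
and expand `X ^ (a_i b_j)` binomially. Expanding the determinant multilinearly in the columns,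
only the exponent vectors permuting `0, …, k - 1` contribute to the lowest power of `X - 1`,
so `det (X ^ (a_i b_j)) = (X - 1) ^ (0 + 1 + ⋯ + (k - 1)) * E` in `ℤ[X]`, where `E(1)` is
`det (choose a_i m) * ∏_{i < j} (b_j - b_i)`, a product of two Vandermonde-type
determinants prime to `p`. But if the determinant vanishes at `ζ` then so does `E`, hence the
cyclotomic polynomial `Φ_p` divides `E` and `p = Φ_p(1)` divides `E(1)`.
-/

theorem Finset.sum_range_card_lt_sum {s : Finset ℕ} (h : ∃ x ∈ s, #s ≤ x) :
    ∑ i ∈ range #s, i < ∑ x ∈ s, x := by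
  obtain ⟨x, hxs, hx⟩ := h
  have hcard : #(range #s \ s) = #(s \ range #s) := card_sdiff_comm (card_range _)
  have hne : (range #s \ s).Nonempty := by
    rw [← card_pos, hcard, card_pos]
    exact ⟨x, by simp [hxs, hx]⟩
  calc ∑ i ∈ range #s, i = ∑ i ∈ range #s ∩ s, i + ∑ i ∈ range #s \ s, i :=
        (sum_inter_add_sum_sdiff _ _ _).symm
    _ < ∑ i ∈ range #s ∩ s, i + ∑ _i ∈ range #s \ s, #s := by
      gcongr with i hi
      exact Finset.mem_range.mp (mem_sdiff.mp hi).1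
    _ = ∑ i ∈ s ∩ range #s, i + ∑ _i ∈ s \ range #s, #s := by
      rw [inter_comm, sum_const, sum_const, hcard]
    _ ≤ ∑ i ∈ s ∩ range #s, i + ∑ i ∈ s \ range #s, i := by
      gcongr with i hi
      simpa using (mem_sdiff.mp hi).2
    _ = ∑ x ∈ s, x := sum_inter_add_sum_sdiff _ _ _

theorem Fin.sum_val_lt_sum_of_injective {k : ℕ} {φ : Fin k → ℕ} (hφ : Function.Injective φ)
    (h : ∃ j, k ≤ φ j) : ∑ i : Fin k, (i : ℕ) < ∑ j, φ j := by
  have hcard : #(univ.image φ) = k := by simp [card_image_of_injective _ hφ]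
  have := sum_range_card_lt_sum (s := univ.image φ) (by simpa [hcard] using h)
  rwa [hcard, ← Fin.sum_univ_eq_sum_range, sum_image (fun _ _ _ _ hij => hφ hij)] at this

theorem one_add_pow_eq_sum_range_choose {R : Type*} [CommSemiring R] (y : R) {a N : ℕ}
    (haN : a < N) : (1 + y) ^ a = ∑ m ∈ range N, (a.choose m : R) * y ^ m := by
  calc (1 + y) ^ a = ∑ m ∈ range (a + 1), (a.choose m : R) * y ^ m := by
        rw [add_comm, add_pow]
        exact sum_congr rfl fun m _ => by ring
    _ = ∑ m ∈ range N, (a.choose m : R) * y ^ m :=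
        sum_subset (range_subset_range.mpr haN) fun m _ hm => by
          simp [Nat.choose_eq_zero_of_lt (by simpa using hm : a < m)]

theorem Matrix.det_of_sum_mul {R n ι : Type*} [CommRing R] [Fintype n] [DecidableEq n]
    (s : Finset ι) (c : n → ι → R) (w : n → ι → R) :
    det (of fun i j => ∑ m ∈ s, c i m * w j m) =
      ∑ φ ∈ Fintype.piFinset fun _ => s, (∏ j, w j (φ j)) * det (of fun i j => c i (φ j)) := by
  rw [← det_transpose]
  have := (detRowAlternating : (n → R) [⋀^n]→ₗ[R] R).map_sum_finset
    (fun j m => w j m • fun i => c i m) (fun _ => s)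
  convert this using 1
  · congr 1; ext j i; simp [mul_comm]
  · refine sum_congr rfl fun φ _ => ?_
    rw [← det_transpose (of fun i j => c i (φ j))]
    exact (det_mul_column (fun j => w j (φ j)) _).symm

theorem Matrix.exists_det_of_sum_mul_pow_eq {R : Type*} [CommRing R] {k N : ℕ} (hkN : k ≤ N)
    (t : R) (c : Fin k → ℕ → R) (g : Fin k → R) :
    ∃ r, det (of fun i j => ∑ m ∈ range N, c i m * (t * g j) ^ m) =
      t ^ (∑ i : Fin k, (i : ℕ)) *
        (det (of fun i m : Fin k => c i m) * det (of fun m j : Fin k => g j ^ (m : ℕ)) + t * r) := by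
  rw [det_of_sum_mul]
  have hsub : (Fintype.piFinset fun _ : Fin k => range k) ⊆ Fintype.piFinset fun _ => range N :=
    Fintype.piFinset_subset _ _ fun _ => range_subset_range.mpr hkN
  have hlow : ∑ φ ∈ Fintype.piFinset (fun _ => range k),
      (∏ j, (t * g j) ^ φ j) * det (of fun i j => c i (φ j)) =
      t ^ (∑ i : Fin k, (i : ℕ)) *
        (det (of fun i m : Fin k => c i m) * det (of fun m j : Fin k => g j ^ (m : ℕ))) := by
    rw [← det_of_sum_mul]
    have hprod : (of fun i j => ∑ m ∈ range k, c i m * (t * g j) ^ m) =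
        (of fun i m : Fin k => c i m) * of fun m j : Fin k => t ^ (m : ℕ) * g j ^ (m : ℕ) := by
      ext i j
      simp only [mul_apply, of_apply, mul_pow]
      exact (Fin.sum_univ_eq_sum_range (fun m => c i m * (t ^ m * g j ^ m)) k).symm
    have hpowers : det (of fun m j : Fin k => t ^ (m : ℕ) * g j ^ (m : ℕ)) =
        t ^ (∑ i : Fin k, (i : ℕ)) * det (of fun m j : Fin k => g j ^ (m : ℕ)) := by
      rw [← prod_pow_eq_pow_sum]
      exact det_mul_column _ _
    rw [hprod, det_mul, hpowers]
    ring
  have hhigh : t ^ (∑ i : Fin k, (i : ℕ) + 1) ∣ ∑ φ ∈ (Fintype.piFinset fun _ => range N) \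
      Fintype.piFinset (fun _ => range k),
      (∏ j, (t * g j) ^ φ j) * det (of fun i j => c i (φ j)) := by
    refine dvd_sum fun φ hφ => ?_
    by_cases hinj : Function.Injective φ
    · have hlarge : ∃ j, k ≤ φ j := by
        simpa [Fintype.mem_piFinset] using (mem_sdiff.mp hφ).2
      rw [prod_congr rfl fun j _ => mul_pow t (g j) (φ j), prod_mul_distrib,
        prod_pow_eq_pow_sum, mul_assoc]
      exact dvd_mul_of_dvd_left (pow_dvd_pow t (Fin.sum_val_lt_sum_of_injective hinj hlarge)) _
    · obtain ⟨j, j', hφj, hjj'⟩ := Function.not_injective_iff.mp hinj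
      rw [det_zero_of_column_eq hjj' fun i => by simp [hφj]]
      simp
  obtain ⟨r, hr⟩ := hhigh
  refine ⟨r, ?_⟩
  rw [← sum_sdiff hsub, hr, hlow]
  ring

theorem Matrix.det_choose_ne_zero {F : Type*} [Field F] {k : ℕ} {a : Fin k → ℕ}
    (ha : Function.Injective fun i => (a i : F)) :
    det (of fun i m : Fin k => ((a i).choose m : F)) ≠ 0 := by
  have hfactor : det (vandermonde fun i => (a i : F)) =
      (∏ m : Fin k, ((m : ℕ).factorial : F)) * det (of fun i m : Fin k => ((a i).choose m : F)) := by
    rw [det_eval_matrixOfPolynomials_eq_det_vandermonde _ _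
      (fun m => descPochhammer_natDegree F m) (fun m => monic_descPochhammer F m)]
    simp_rw [descPochhammer_eval_eq_descFactorial, Nat.descFactorial_eq_factorial_mul_choose,
      Nat.cast_mul]
    exact det_mul_row _ _
  intro h
  rw [h, mul_zero] at hfactor
  exact det_vandermonde_ne_zero_iff.mpr ha hfactor

theorem ZMod.injective_natCast_comp {ι : Type*} {p : ℕ} {v : ι → ℕ} (hv : ∀ i, v i < p)
    (hinj : Function.Injective v) : Function.Injective fun i => (v i : ZMod p) :=
  fun i j h => hinj (by
    simpa [ZMod.val_cast_of_lt (hv i), ZMod.val_cast_of_lt (hv j)] using congrArg ZMod.val h)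

theorem IsPrimitiveRoot.dvd_eval_one_of_aeval_eq_zero {K : Type*} [Field K] [CharZero K]
    {p : ℕ} (hp : p.Prime) {ζ : K} (hζ : IsPrimitiveRoot ζ p) {E : ℤ[X]} (hE : aeval ζ E = 0) :
    (p : ℤ) ∣ E.eval 1 := by
  have := Fact.mk hp
  obtain ⟨H, rfl⟩ : cyclotomic p ℤ ∣ E := by
    rw [cyclotomic_eq_minpoly hζ hp.pos]
    exact minpoly.isIntegrallyClosed_dvd (hζ.isIntegral hp.pos) hE
  simp [eval_one_cyclotomic_prime]

theorem Polynomial.exists_det_X_pow_mul_eq {R : Type*} [CommRing R] {k N : ℕ} (hkN : k ≤ N)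
    {a : Fin k → ℕ} (ha : ∀ i, a i < N) (b : Fin k → ℕ) :
    ∃ E : R[X], det (of fun i j => (X : R[X]) ^ (a i * b j)) =
        (X - 1) ^ (∑ i : Fin k, (i : ℕ)) * E ∧
      E.eval 1 = det (of fun i m : Fin k => ((a i).choose m : R)) *
        det (vandermonde fun j => (b j : R)) := by
  set g : Fin k → R[X] := fun j => ∑ n ∈ range (b j), X ^ n
  have hexpand : ∀ i j, (X : R[X]) ^ (a i * b j) =
      ∑ m ∈ range N, ((a i).choose m : R[X]) * ((X - 1) * g j) ^ m := by
    intro i j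
    rw [← one_add_pow_eq_sum_range_choose _ (ha i), mul_comm (X - 1), geom_sum_mul,
      add_sub_cancel, mul_comm, pow_mul]
  obtain ⟨r, hr⟩ := exists_det_of_sum_mul_pow_eq hkN (X - 1 : R[X])
    (fun i m => ((a i).choose m : R[X])) g
  simp_rw [← hexpand] at hr
  refine ⟨_, hr, ?_⟩
  have hchoose : (evalRingHom 1).mapMatrix (of fun i m : Fin k => ((a i).choose m : R[X])) =
      of fun i m : Fin k => ((a i).choose m : R) := by
    ext i m; simp
  have hgeom : (evalRingHom 1).mapMatrix (of fun m j : Fin k => g j ^ (m : ℕ)) =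
      (vandermonde fun j => (b j : R))ᵀ := by
    ext m j; simp [g, vandermonde, eval_finsetSum]
  rw [← coe_evalRingHom, map_add, map_mul, map_mul, RingHom.map_det, RingHom.map_det, hchoose,
    hgeom, det_transpose]
  simp

theorem IsPrimitiveRoot.det_pow_mul_ne_zero {K : Type*} [Field K] [CharZero K] {p k : ℕ}
    (hp : p.Prime) {ζ : K} (hζ : IsPrimitiveRoot ζ p) {a b : Fin k → ℕ} (ha : ∀ i, a i < p)
    (hb : ∀ j, b j < p) (ha_inj : Function.Injective a) (hb_inj : Function.Injective b) :
    det (of fun i j => ζ ^ (a i * b j)) ≠ 0 := by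
  have hkp : k ≤ p := by
    simpa using Fintype.card_le_of_injective (fun i => (⟨a i, ha i⟩ : Fin p))
      fun i j hij => ha_inj (Fin.mk.inj_iff.mp hij)
  obtain ⟨E, hdet, hE1⟩ := exists_det_X_pow_mul_eq (R := ℤ) hkp ha b
  intro hζdet
  have hE : aeval ζ E = 0 := by
    have hmap : (aeval ζ).mapMatrix (of fun i j => (X : ℤ[X]) ^ (a i * b j)) =
        of fun i j => ζ ^ (a i * b j) := by
      ext i j; simp
    have hζ1 : aeval ζ (X - 1 : ℤ[X]) ≠ 0 := by
      simpa [sub_eq_zero] using hζ.ne_one hp.one_lt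
    have := congrArg (aeval ζ) hdet
    rw [AlgHom.map_det, hmap, hζdet, map_mul, map_pow, eq_comm, mul_eq_zero] at this
    exact this.resolve_left (pow_ne_zero _ hζ1)
  have hE1p := (ZMod.intCast_zmod_eq_zero_iff_dvd _ p).mpr
    (hζ.dvd_eval_one_of_aeval_eq_zero hp hE)
  have := Fact.mk hp
  have hchoose : (of fun i m : Fin k => ((a i).choose m : ℤ)).map (Int.cast : ℤ → ZMod p) =
      of fun i m : Fin k => ((a i).choose m : ZMod p) := by
    ext i m; simp
  have hvandermonde : (vandermonde fun j => (b j : ℤ)).map (Int.cast : ℤ → ZMod p) =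
      vandermonde fun j => (b j : ZMod p) := by
    ext i j; simp [vandermonde]
  rw [hE1, Int.cast_mul, Int.cast_det, Int.cast_det, hchoose, hvandermonde] at hE1p
  exact mul_ne_zero (det_choose_ne_zero (ZMod.injective_natCast_comp ha ha_inj))
    (det_vandermonde_ne_zero_iff.mpr (ZMod.injective_natCast_comp hb hb_inj)) hE1p

theorem IsPrimitiveRoot.det_pow_ne_zero {K : Type*} [Field K] [CharZero K] {p k : ℕ}
    (hp : p.Prime) {ζ : K} (hζ : IsPrimitiveRoot ζ p) {x : Fin k → K} (hx : ∀ j, x j ^ p = 1)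
    (hx_inj : Function.Injective x) {a : Fin k → ℕ} (ha : ∀ i, a i < p)
    (ha_inj : Function.Injective a) : det (of fun i j => x j ^ a i) ≠ 0 := by
  have := NeZero.mk hp.ne_zero
  choose b hb hbx using fun j => hζ.eq_pow_of_pow_eq_one (hx j)
  have hb_inj : Function.Injective b := fun i j h => hx_inj (by rw [← hbx i, ← hbx j, h])
  convert hζ.det_pow_mul_ne_zero hp ha hb ha_inj hb_inj using 2
  ext i j
  rw [of_apply, of_apply, ← hbx j, ← pow_mul, mul_comm]

theorem Polynomial.det_pow_eq_zero_of_support_subset {K : Type*} [Field K] {f : K[X]}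
    (hf : f ≠ 0) {k : ℕ} {a : Fin k → ℕ} (ha : Function.Injective a)
    (hsupp : f.support ⊆ univ.image a) {x : Fin k → K} (hx : ∀ j, f.eval (x j) = 0) :
    det (of fun i j => x j ^ a i) = 0 := by
  refine exists_vecMul_eq_zero_iff.mp ⟨fun i => f.coeff (a i), fun hc => ?_, ?_⟩
  · obtain ⟨n, hn⟩ := support_nonempty.mpr hf
    obtain ⟨i, -, rfl⟩ := mem_image.mp (hsupp hn)
    exact mem_support_iff.mp hn (congrFun hc i)
  · ext j
    rw [Pi.zero_apply, ← hx j, eval_eq_sum, sum_def,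
      sum_subset hsupp fun n _ hn => by rw [notMem_support_iff.mp hn, zero_mul],
      sum_image fun _ _ _ _ h => ha h]
    rfl

/-- For a prime `p` and a nonzero polynomial `f ∈ ℂ[X]` of degree `< p`, the number `Z(f)`
of `p`-th roots of unity that are roots of `f` satisfies `Z(f) ≤ wt(f) - 1`, where `wt(f)`
is the number of nonzero coefficients of `f`. -/
theorem roots_of_unity_le_weight (p : ℕ) (hp : p.Prime) (f : Polynomial ℂ) (hf : f ≠ 0)
    (hdeg : f.natDegree < p) :
    {μ : ℂ | μ ^ p = 1 ∧ f.eval μ = 0}.ncard + 1 ≤ f.support.card := by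
  by_contra! hcard
  set S := {μ : ℂ | μ ^ p = 1 ∧ f.eval μ = 0}
  have : Fintype S := Set.Finite.fintype <| (nthRootsFinset p (1 : ℂ)).finite_toSet.subset
    fun μ hμ => (mem_nthRootsFinset hp.pos 1).mpr hμ.1
  obtain ⟨x⟩ : Nonempty (Fin #f.support ↪ S) := Function.Embedding.nonempty_of_card_le <| by
    rw [Fintype.card_fin, ← Nat.card_eq_fintype_card, Nat.card_coe_set_eq]
    omega
  exact (Complex.isPrimitiveRoot_exp p hp.ne_zero).det_pow_ne_zero hp (fun j => (x j).2.1)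
    (Subtype.val_injective.comp x.injective)
    (fun i => (le_natDegree_of_mem_supp _ (f.support.orderEmbOfFin_mem rfl i)).trans_lt hdeg)
    (f.support.orderEmbOfFin rfl).injective
    (det_pow_eq_zero_of_support_subset hf (f.support.orderEmbOfFin rfl).injective
      (image_orderEmbOfFin_univ f.support rfl).ge fun j => (x j).2.2)
end

section
/- For each prime p, the ideal I_f of ℂ[X]/(X^p - 1) generated by f = Π_{i=1}^{(p-1)/2} (X - ξ^i), where ξ = e^{2πi/p}, is a cyclic code of length p, dimension (p+1)/2, and minimum distance at least (p+1)/2. -/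
open Polynomial Complex

/-!
Since `f ∣ X^p - 1`, the code `(f)` is the kernel of `ℂ[X]/(X^p - 1) → ℂ[X]/(f)`, so its dimension
is `p - deg f = (p + 1)/2`. A codeword `g` of degree `< p` is divisible by `f`, hence vanishes at
`ξ, ξ², …, ξ^k`, `k = (p - 1)/2`. Writing `g(ξ^(i+1)) = ∑ₙ (gₙ ξⁿ) (ξⁿ)^i` over `n ∈ supp g`, these
are `k` equations in the unknowns `gₙ ξⁿ` with the Vandermonde matrix of the distinct nodes `ξⁿ`;
if `g` had at most `k` nonzero coefficients the system would force `g = 0` (the BCH bound).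
-/

theorem Finset.eq_zero_of_forall_sum_mul_pow_eq_zero {R ι : Type*} [CommRing R] [IsDomain R]
    (s : Finset ι) {f v : ι → R} (hf : Set.InjOn f s)
    (hfv : ∀ i < s.card, ∑ j ∈ s, v j * f j ^ i = 0) : ∀ j ∈ s, v j = 0 := by
  set e := s.equivFin.symm
  have hv : (fun k => v (e k)) = 0 := by
    refine Matrix.eq_zero_of_forall_pow_sum_mul_pow_eq_zero (f := fun k => f (e k))
      (fun a b hab => e.injective (Subtype.ext (hf (e a).2 (e b).2 hab))) fun i => ?_
    rw [← hfv i i.2, ← s.sum_coe_sort]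
    exact e.sum_comp fun j : s => v j * f j ^ (i : ℕ)
  intro j hj
  simpa [e] using congrFun hv (s.equivFin ⟨j, hj⟩)

theorem Polynomial.lt_card_support_of_eval_pow_eq_zero {R : Type*} [CommRing R] [IsDomain R]
    {g : R[X]} (hg : g ≠ 0) {ζ : R} (hζ : ζ ≠ 0) (hinj : Set.InjOn (ζ ^ ·) g.support) {d : ℕ}
    (hroots : ∀ i ∈ Finset.Icc 1 d, g.eval (ζ ^ i) = 0) : d < g.support.card := by
  by_contra! hcard
  have hcoeff := g.support.eq_zero_of_forall_sum_mul_pow_eq_zero (v := fun n => g.coeff n * ζ ^ n)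
    hinj fun i hi => ?_
  · obtain ⟨n, hn⟩ := support_nonempty.mpr hg
    exact mul_ne_zero (mem_support_iff.mp hn) (pow_ne_zero n hζ) (hcoeff n hn)
  · have hroot := hroots (i + 1) (Finset.mem_Icc.mpr ⟨by omega, by omega⟩)
    rw [eval_eq_sum, sum_def] at hroot
    rw [← hroot]
    refine Finset.sum_congr rfl fun n _ => ?_
    ring

theorem Ideal.span_singleton_mk_eq_map {R : Type*} [CommRing R] (I : Ideal R) (f : R) :
    Ideal.span {Ideal.Quotient.mk I f} = (Ideal.span {f}).map (Ideal.Quotient.mk I) := by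
  rw [Ideal.map_span, Set.image_singleton]

theorem Ideal.Quotient.mk_mem_span_mk_iff_dvd {R : Type*} [CommRing R] {f q g : R} (hfq : f ∣ q) :
    Ideal.Quotient.mk (Ideal.span {q}) g ∈ Ideal.span {Ideal.Quotient.mk (Ideal.span {q}) f} ↔
      f ∣ g := by
  rw [Ideal.span_singleton_mk_eq_map,
    Ideal.mem_quotient_iff_mem (Ideal.span_singleton_le_span_singleton.mpr hfq),
    Ideal.mem_span_singleton]

theorem Polynomial.finrank_span_mk_of_dvd {K : Type*} [Field K] {f q : K[X]} (hq : q ≠ 0)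
    (hfq : f ∣ q) :
    Module.finrank K (Ideal.span {Ideal.Quotient.mk (Ideal.span {q}) f}) =
      q.natDegree - f.natDegree := by
  have : Module.Finite K (K[X] ⧸ Ideal.span {q}) := (AdjoinRoot.powerBasis hq).finite
  have hle : Ideal.span {q} ≤ Ideal.span {f} := Ideal.span_singleton_le_span_singleton.mpr hfq
  set I := (Ideal.span {f}).map (Ideal.Quotient.mkₐ K (Ideal.span {q}))
  have hsum := Submodule.finrank_quotient_add_finrank (I.restrictScalars K)
  rw [(Submodule.Quotient.restrictScalarsEquiv K I).finrank_eq,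
    (DoubleQuot.quotQuotEquivQuotOfLEₐ K hle).toLinearEquiv.finrank_eq,
    finrank_quotient_span_eq_natDegree, finrank_quotient_span_eq_natDegree] at hsum
  rw [Ideal.span_singleton_mk_eq_map]
  change Module.finrank K I = _
  rw [← hsum, Nat.add_sub_cancel_left]
  rfl

theorem IsPrimitiveRoot.prod_X_sub_C_pow_dvd {R : Type*} [CommRing R] [IsDomain R] {ζ : R} {n : ℕ}
    (hζ : IsPrimitiveRoot ζ n) {s : Finset ℕ} (hs : s ⊆ Finset.range n) :
    ∏ i ∈ s, (X - C (ζ ^ i)) ∣ X ^ n - 1 := by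
  rcases Nat.eq_zero_or_pos n with rfl | hn
  · simp [Finset.subset_empty.mp hs]
  · have hprod := X_pow_sub_C_eq_prod hζ hn (one_pow n)
    rw [C_1] at hprod
    simp_rw [hprod, mul_one]
    exact Finset.prod_dvd_prod_of_subset _ _ _ hs

/-- For an odd prime `p`, the ideal of `ℂ[X]/(X^p - 1)` generated by
`f = ∏_{i=1}^{(p-1)/2} (X - ξ^i)`, with `ξ = e^{2πi/p}`, is a cyclic code of length `p`,
dimension `(p+1)/2`, whose nonzero elements all have weight at least `(p+1)/2`. -/
theorem reed_solomon_good (p : ℕ) (hp : p.Prime) (hodd : p ≠ 2) :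
    Module.finrank ℂ
      (Ideal.span {Ideal.Quotient.mk (Ideal.span {(X : Polynomial ℂ) ^ p - 1})
        (∏ i ∈ Finset.Icc 1 ((p - 1) / 2),
          (X - C (Complex.exp (2 * Real.pi * Complex.I / p) ^ i)))}) = (p + 1) / 2 ∧
    ∀ g : Polynomial ℂ, g.natDegree < p →
      Ideal.Quotient.mk (Ideal.span {(X : Polynomial ℂ) ^ p - 1}) g ∈
        Ideal.span {Ideal.Quotient.mk (Ideal.span {(X : Polynomial ℂ) ^ p - 1})
          (∏ i ∈ Finset.Icc 1 ((p - 1) / 2),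
            (X - C (Complex.exp (2 * Real.pi * Complex.I / p) ^ i)))} →
      g ≠ 0 → (p + 1) / 2 ≤ g.support.card := by
  set ζ := Complex.exp (2 * Real.pi * Complex.I / p)
  have hζ : IsPrimitiveRoot ζ p := Complex.isPrimitiveRoot_exp p hp.ne_zero
  have hp_odd : p % 2 = 1 := Nat.odd_iff.mp (hp.odd_of_ne_two hodd)
  have hdvd : ∏ i ∈ Finset.Icc 1 ((p - 1) / 2), (X - C (ζ ^ i)) ∣ X ^ p - 1 :=
    hζ.prod_X_sub_C_pow_dvd fun i hi => by
      simp only [Finset.mem_Icc, Finset.mem_range] at hi ⊢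
      omega
  refine ⟨?_, fun g hdeg hmem hg => ?_⟩
  · have hq : (X ^ p - 1 : ℂ[X]) = X ^ p - C 1 := by rw [C_1]
    rw [finrank_span_mk_of_dvd (hq ▸ X_pow_sub_C_ne_zero hp.pos 1) hdvd, hq,
      natDegree_X_pow_sub_C, natDegree_finsetProd_X_sub_C_eq_card, Nat.card_Icc]
    omega
  · rw [Ideal.Quotient.mk_mem_span_mk_iff_dvd hdvd] at hmem
    have hinj : Set.InjOn (ζ ^ ·) g.support := fun a ha b hb =>
      hζ.pow_inj ((le_natDegree_of_mem_supp a ha).trans_lt hdeg)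
        ((le_natDegree_of_mem_supp b hb).trans_lt hdeg)
    have hbound := lt_card_support_of_eval_pow_eq_zero hg (hζ.ne_zero hp.ne_zero) hinj
      fun i hi => eval_eq_zero_of_dvd_of_eval_eq_zero hmem <| by
        rw [eval_prod]
        exact Finset.prod_eq_zero hi (by simp)
    omega
end

section
/- Let ℓ and p be distinct primes and suppose ℓ is a primitive root modulo p (i.e., ord_p(ℓ) = p - 1). Then for every nonzero f ∈ F_ℓ[X]/(X^p - 1), we have wt(f) + dim(I_f) ≥ p + 1, where I_f is the ideal generated by f. -/
/-!
Over `𝔽_ℓ` we have `X^p - 1 = Φ_p · (X - 1)`, and `Φ_p` is irreducible because every irreducible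
factor of `Φ_p` has degree `ord_p ℓ = p - 1`. The ideal `I_f` has codimension
`deg gcd(f, X^p - 1)` in `𝔽_ℓ[X]/(X^p - 1)`, since the quotient by it is `𝔽_ℓ[X]/(gcd)`.
If `Φ_p ∣ f`, then `f` is a scalar multiple of `Φ_p`, so `wt f = p`, while `I_f ≠ 0`.
Otherwise the gcd divides `X - 1`: either it is a unit and `dim I_f = p`, or `f(1) = 0`, so `f`
is not a monomial and `wt f ≥ 2`, while `dim I_f = p - 1`.
-/

open Polynomial

theorem finrank_span_mk_add_natDegree_gcd {F : Type*} [Field F] [DecidableEq F] {g : F[X]}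
    (hg : g ≠ 0) (f : F[X]) :
    Module.finrank F (Ideal.span {Ideal.Quotient.mk (Ideal.span {g}) f}) +
      (gcd f g).natDegree = g.natDegree := by
  set I : Ideal F[X] := Ideal.span {g}
  set J : Ideal (F[X] ⧸ I) := Ideal.span {Ideal.Quotient.mk I f}
  have : Module.Finite F (F[X] ⧸ I) := (AdjoinRoot.powerBasis hg).finite
  have hJ : J = (Ideal.span {f}).map (Ideal.Quotient.mkₐ F I) := by
    rw [Ideal.map_span, Set.image_singleton]; rfl
  have hsup : I ⊔ Ideal.span {f} = Ideal.span {gcd f g} := by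
    rw [span_gcd, Ideal.span_insert, sup_comm]
  have hquot : Module.finrank F ((F[X] ⧸ I) ⧸ J) = (gcd f g).natDegree := by
    rw [hJ, (DoubleQuot.quotQuotEquivQuotSupₐ F I (Ideal.span {f})).toLinearEquiv.finrank_eq,
      hsup, finrank_quotient_span_eq_natDegree]
  rw [← hquot, ← finrank_quotient_span_eq_natDegree, add_comm]
  exact Submodule.finrank_quotient_add_finrank (J.restrictScalars F)

theorem irreducible_cyclotomic_of_orderOf_eq_totient {ℓ n : ℕ} [Fact ℓ.Prime] (hℓn : ¬ℓ ∣ n)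
    (hord : orderOf (ℓ : ZMod n) = n.totient) : Irreducible (cyclotomic n (ZMod ℓ)) :=
  ZMod.irreducible_of_dvd_cyclotomic_of_natDegree hℓn dvd_rfl <| by
    rw [natDegree_cyclotomic, ← hord, ← orderOf_units, ZMod.coe_unitOfCoprime]

theorem card_support_C_mul_cyclotomic_prime {R : Type*} [Ring R] {p : ℕ} [Fact p.Prime] {c : R}
    (hc : c ≠ 0) : (C c * cyclotomic p R).support.card = p := by
  suffices (C c * cyclotomic p R).support = Finset.range p by rw [this, Finset.card_range]
  ext n
  simp [cyclotomic_prime, coeff_X_pow, hc]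

theorem card_support_eq_of_cyclotomic_prime_dvd {R : Type*} [CommRing R] [Nontrivial R] {p : ℕ}
    [Fact p.Prime] {f : R[X]} (hf : f ≠ 0) (hfp : f.natDegree < p) (hdvd : cyclotomic p R ∣ f) :
    f.support.card = p := by
  have hdeg : f.natDegree ≤ (cyclotomic p R).natDegree := by
    rw [natDegree_cyclotomic, Nat.totient_prime (Fact.out : p.Prime)]
    omega
  rw [eq_leadingCoeff_mul_of_monic_of_dvd_of_natDegree_le (cyclotomic.monic p R) hdvd hdeg]
  exact card_support_C_mul_cyclotomic_prime (leadingCoeff_ne_zero.mpr hf)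

theorem two_le_card_support_of_isRoot {R : Type*} [Semiring R] [NoZeroDivisors R] {f : R[X]}
    {a : R} (hf : f ≠ 0) (ha : a ≠ 0) (hroot : f.IsRoot a) : 2 ≤ f.support.card := by
  by_contra! hlt
  have hcard : f.support.card = 1 := by
    have := Finset.card_pos.mpr (support_nonempty.mpr hf)
    omega
  obtain ⟨k, c, hc, rfl⟩ := card_support_eq_one.mp hcard
  exact pow_ne_zero k ha (by simpa [hc] using hroot)

theorem natDegree_gcd_X_pow_sub_one_lt_card_support {K : Type*} [Field K] [DecidableEq K]
    {p : ℕ} [Fact p.Prime] (hirr : Irreducible (cyclotomic p K)) {f : K[X]} (hf : f ≠ 0)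
    (hdvd : ¬cyclotomic p K ∣ f) : (gcd f (X ^ p - 1)).natDegree < f.support.card := by
  set d := gcd f (X ^ p - 1)
  have hcop : IsCoprime (cyclotomic p K) d :=
    hirr.coprime_iff_not_dvd.mpr fun h ↦ hdvd (h.trans (gcd_dvd_left _ _))
  have hd : d ∣ X - C 1 := by
    refine hcop.symm.dvd_of_dvd_mul_left ?_
    rw [C_1, cyclotomic_prime_mul_X_sub_one]
    exact gcd_dvd_right _ _
  rcases (irreducible_X_sub_C 1).dvd_iff.mp hd with hunit | hassoc
  · rw [natDegree_eq_zero_of_isUnit hunit]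
    exact Finset.card_pos.mpr (support_nonempty.mpr hf)
  · have hroot : f.IsRoot 1 := dvd_iff_isRoot.mp (hassoc.dvd.trans (gcd_dvd_left _ _))
    rw [← natDegree_eq_of_degree_eq (degree_eq_degree_of_associated hassoc), natDegree_X_sub_C]
    exact two_le_card_support_of_isRoot hf one_ne_zero hroot

/-- If `ℓ` is a primitive root modulo the prime `p ≠ ℓ`, then the uncertainty principle
holds for `F_ℓ` and `p`: every nonzero `f ∈ F_ℓ[X]` of degree `< p` satisfies
`wt(f) + dim I_f ≥ p + 1`. -/
theorem uncertainty_of_primitive_root (ℓ p : ℕ) (hℓ : ℓ.Prime) (hp : p.Prime) (hne : ℓ ≠ p)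
    (hprim : orderOf ((ℓ : ZMod p)) = p - 1) :
    ∀ f : Polynomial (ZMod ℓ), f ≠ 0 → f.natDegree < p →
      p + 1 ≤ f.support.card +
        Module.finrank (ZMod ℓ)
          (Ideal.span {Ideal.Quotient.mk
            (Ideal.span {(X : Polynomial (ZMod ℓ)) ^ p - 1}) f}) := by
  have := Fact.mk hℓ
  have := Fact.mk hp
  intro f hf hfp
  have hirr : Irreducible (cyclotomic p (ZMod ℓ)) :=
    irreducible_cyclotomic_of_orderOf_eq_totient
      (fun h ↦ hne ((Nat.prime_dvd_prime_iff_eq hℓ hp).mp h))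
      (by rw [hprim, Nat.totient_prime hp])
  have hdeg : (X ^ p - 1 : (ZMod ℓ)[X]).natDegree = p := by
    simpa using natDegree_X_pow_sub_C (n := p) (r := (1 : ZMod ℓ))
  have hdim := finrank_span_mk_add_natDegree_gcd
    (by simpa using X_pow_sub_C_ne_zero hp.pos (1 : ZMod ℓ)) f
  rw [hdeg] at hdim
  have hgcd : (gcd f (X ^ p - 1)).natDegree ≤ f.natDegree :=
    natDegree_le_of_dvd (gcd_dvd_left _ _) hf
  by_cases hdvd : cyclotomic p (ZMod ℓ) ∣ f
  · have := card_support_eq_of_cyclotomic_prime_dvd hf hfp hdvd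
    omega
  · have := natDegree_gcd_X_pow_sub_one_lt_card_support hirr hf hdvd
    omega
end

section
/- Let p be a prime and F a field of characteristic p. For every nonzero polynomial f ∈ F[X] of degree < p, if (X-1)^m divides f then wt(f) > m. Equivalently, wt(f) + dim(I_f) ≥ p + 1 for every nonzero f in F[X]/(X^p - 1). -/
/-! The operator `f ↦ X f' - (deg f) f` multiplies the coefficient of `X^j` by `j - deg f`, which in
characteristic `p` vanishes only for `j = deg f` as long as `deg f < p`. So it deletes exactly one
monomial of `f`, while `(X - a)^(m+1) ∣ f` still gives `(X - a)^m ∣ X f' - (deg f) f`. Applying it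
`m` times to a multiple of `(X - 1)^m` never reaches a single monomial, which has no root at `1`;
hence `wt f > m`. For the dimension bound take `m` the multiplicity of `1` as a root of `f`: since
`X^p - 1 = (X - 1)^p`, multiplication by `f` is injective modulo `X^p - 1` on polynomials of degree
`< p - m`, so `dim I_f ≥ p - m`. -/

open Polynomial

namespace Polynomial

section CommRing

variable {R : Type*} [CommRing R]

theorem coeff_X_mul_derivative_sub_C_mul (f : R[X]) (n j : ℕ) :
    (X * derivative f - C (n : R) * f).coeff j = ((j : R) - n) * f.coeff j := by
  cases j with
  | zero => simp
  | succ i =>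
    rw [coeff_sub, coeff_X_mul, coeff_derivative, coeff_C_mul]
    push_cast
    ring

variable [NoZeroDivisors R] {p : ℕ} [CharP R p]

theorem support_X_mul_derivative_sub_C_natDegree_mul {f : R[X]} (hfp : f.natDegree < p) :
    (X * derivative f - C (f.natDegree : R) * f).support = f.support.erase f.natDegree := by
  ext j
  simp only [mem_support_iff, Finset.mem_erase, coeff_X_mul_derivative_sub_C_mul, ne_eq,
    mul_eq_zero, not_or, sub_eq_zero, and_congr_left_iff]
  intro hj
  have hjp : j < p := (le_natDegree_of_ne_zero hj).trans_lt hfp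
  exact (CharP.natCast_injOn_Iio R p).eq_iff hjp hfp |>.not

theorem not_X_sub_C_dvd_of_card_support_eq_one {a : R} (ha : a ≠ 0) {f : R[X]}
    (hf : f.support.card = 1) : ¬ X - C a ∣ f := by
  obtain ⟨k, c, hc, rfl⟩ := card_support_eq_one.1 hf
  rw [dvd_iff_isRoot, IsRoot, eval_mul, eval_C, eval_pow, eval_X]
  exact mul_ne_zero hc (pow_ne_zero k ha)

theorem lt_card_support_of_X_sub_C_pow_dvd {a : R} (ha : a ≠ 0) {m : ℕ} :
    ∀ {f : R[X]}, f ≠ 0 → f.natDegree < p → (X - C a) ^ m ∣ f → m < f.support.card := by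
  induction m with
  | zero => exact fun hf _ _ => Finset.card_pos.2 (support_nonempty.2 hf)
  | succ m ih =>
    intro f hf hfp hdvd
    set g := X * derivative f - C (f.natDegree : R) * f
    have hg_support : g.support = f.support.erase f.natDegree :=
      support_X_mul_derivative_sub_C_natDegree_mul hfp
    have hg_card : g.support.card = f.support.card - 1 := by
      rw [hg_support, Finset.card_erase_of_mem (natDegree_mem_support_of_nonzero hf)]
    have hg_dvd : (X - C a) ^ m ∣ g := by
      refine dvd_sub (dvd_mul_of_dvd_right ?_ _) (dvd_mul_of_dvd_right ?_ _)
      · simpa using pow_sub_one_dvd_derivative_of_pow_dvd hdvd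
      · exact (pow_dvd_pow _ m.le_succ).trans hdvd
    by_cases hg : g = 0
    · have hf_card : f.support.card = 1 := by
        have := Finset.card_pos.2 (support_nonempty.2 hf)
        rw [hg, support_zero, Finset.card_empty] at hg_card
        omega
      exact absurd ((dvd_pow_self _ m.succ_ne_zero).trans hdvd)
        (not_X_sub_C_dvd_of_card_support_eq_one ha hf_card)
    · have hgp : g.natDegree < p := by
        refine lt_of_le_of_lt ?_ hfp
        rw [natDegree_le_iff_coeff_eq_zero]
        intro j hj
        rw [coeff_X_mul_derivative_sub_C_mul, coeff_eq_zero_of_natDegree_lt hj, mul_zero]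
      have := ih hg hgp hg_dvd
      omega

end CommRing

theorem le_rootMultiplicity_add_natDegree_of_X_sub_C_pow_dvd_mul {R : Type*} [CommRing R]
    [IsDomain R] {f h : R[X]} {a : R} {n : ℕ} (hfh : f * h ≠ 0) (hdvd : (X - C a) ^ n ∣ f * h) :
    n ≤ f.rootMultiplicity a + h.natDegree := by
  classical
  have hh : h.rootMultiplicity a ≤ h.natDegree :=
    (count_roots h).symm.le.trans ((Multiset.count_le_card _ _).trans (card_roots' h))
  have := (le_rootMultiplicity_iff hfh).2 hdvd
  rw [rootMultiplicity_mul hfh] at this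
  omega

theorem le_finrank_span_singleton_mk {F : Type*} [Field F] {q : F[X]} (hq : q.Monic) (f : F[X])
    {d : ℕ} (hd : ∀ h ∈ degreeLT F d, q ∣ f * h → h = 0) :
    d ≤ Module.finrank F (Ideal.span {Ideal.Quotient.mk (Ideal.span {q}) f}) := by
  have := hq.finite_quotient
  set I := Ideal.span {Ideal.Quotient.mk (Ideal.span {q}) f}
  let φ : degreeLT F d →ₗ[F] F[X] ⧸ Ideal.span {q} :=
    (Ideal.Quotient.mkₐ F _).toLinearMap ∘ₗ LinearMap.mulLeft F f ∘ₗ (degreeLT F d).subtype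
  have hφ : Function.Injective φ := by
    rw [← LinearMap.ker_eq_bot, LinearMap.ker_eq_bot']
    intro h hφh
    refine Subtype.ext (hd h h.2 ?_)
    rw [← Ideal.mem_span_singleton, ← Ideal.Quotient.eq_zero_iff_mem, map_mul]
    simpa [φ] using hφh
  have hrange : LinearMap.range φ ≤ I.restrictScalars F := by
    rintro _ ⟨h, rfl⟩
    exact Ideal.mem_span_singleton.2 ⟨Ideal.Quotient.mk _ h, by simp [φ]⟩
  calc d = Module.finrank F (LinearMap.range φ) := by
        rw [LinearMap.finrank_range_of_inj hφ, (degreeLTEquiv F d).finrank_eq,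
          Module.finrank_fin_fun]
    _ ≤ Module.finrank F (I.restrictScalars F) := Submodule.finrank_mono hrange

end Polynomial

/-- Uncertainty principle in characteristic `p`: over a field `F` of characteristic `p`,
every nonzero `f ∈ F[X]` of degree `< p` with `(X-1)^m ∣ f` satisfies `wt(f) > m`;
equivalently, `wt(f) + dim I_f ≥ p + 1` for every nonzero `f ∈ F[X]/(X^p - 1)`. -/
theorem uncertainty_char_p (p : ℕ) (hp : p.Prime) (F : Type*) [Field F] [CharP F p] :
    (∀ f : Polynomial F, f ≠ 0 → f.natDegree < p →
      ∀ m : ℕ, ((X : Polynomial F) - 1) ^ m ∣ f → m < f.support.card) ∧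
    (∀ f : Polynomial F, f ≠ 0 → f.natDegree < p →
      p + 1 ≤ f.support.card +
        Module.finrank F
          (Ideal.span {Ideal.Quotient.mk
            (Ideal.span {(X : Polynomial F) ^ p - 1}) f})) := by
  have := Fact.mk hp
  have hX_sub_one : (X : F[X]) - 1 = X - C 1 := by rw [map_one]
  refine ⟨fun f hf hfp m hdvd =>
    lt_card_support_of_X_sub_C_pow_dvd one_ne_zero hf hfp (hX_sub_one ▸ hdvd), fun f hf hfp => ?_⟩
  have hwt : f.rootMultiplicity 1 < f.support.card :=
    lt_card_support_of_X_sub_C_pow_dvd one_ne_zero hf hfp (pow_rootMultiplicity_dvd f 1)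
  have hmonic : ((X : F[X]) ^ p - 1).Monic := by
    simpa using monic_X_pow_sub_C (1 : F) hp.ne_zero
  have hdim := le_finrank_span_singleton_mk hmonic f (d := p - f.rootMultiplicity 1)
    fun h hh hdvd => by
      by_contra hne
      rw [← one_pow p, ← sub_pow_char, hX_sub_one] at hdvd
      have := le_rootMultiplicity_add_natDegree_of_X_sub_C_pow_dvd_mul (mul_ne_zero hf hne) hdvd
      have := (natDegree_lt_iff_degree_lt hne).2 (mem_degreeLT.1 hh)
      omega
  omega
end

section
/- Let F = F_ℓ be a finite field of prime order ℓ, and suppose there exist real numbers 0 < ε < δ < 1 and an infinite set P of primes such that for every p ∈ P: (1) every nonzero f ∈ F[X]/(X^p - 1) satisfies wt(f) + dim(I_f) > δp, and (2) ord_p(ℓ) < εp. Then for each p ∈ P there exists an ideal I_p ⊆ F[X]/(X^p - 1) with dim(I_p) ≥ εp/2 and such that every nonzero h ∈ I_p has wt(h) > (δ - ε)p; i.e., there is an infinite family of cyclic codes over F with rate ≥ ε/2 and relative distance ≥ δ - ε. -/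
/-!
Let `r = ord_p ℓ`. Since `ℓ ^ r ≡ 1 [MOD p]`, the polynomial `X ^ p - 1` divides
`X ^ ℓ ^ r - X`, so its irreducible factors over `𝔽_ℓ` have degree dividing `r` (degree `1` when
`p = ℓ`), hence at most `εp` once `εp ≥ 1`. Collecting factors greedily gives `c ∣ X ^ p - 1`
with `εp/2 ≤ deg c ≤ εp`, and for `X ^ p - 1 = g * c` the ideal `(g)` has dimension `deg c`.
A nonzero `f ∈ (g)` has `dim I_f ≤ deg c ≤ εp`, so the uncertainty principle forces
`wt f > (δ - ε)p`. If `εp < 1`, the repetition code spanned by `1 + X + ⋯ + X ^ (p - 1)` works: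
it is one-dimensional and all its nonzero words have weight `p`.
-/

open Polynomial

theorem pow_sub_one_dvd_pow_sub_pow_of_modEq {R : Type*} [CommRing R] (x : R) {n a b : ℕ}
    (h : a ≡ b [MOD n]) : x ^ n - 1 ∣ x ^ a - x ^ b := by
  wlog hba : b ≤ a generalizing a b
  · simpa only [neg_sub] using (this h.symm (le_of_not_ge hba)).neg_right
  obtain ⟨k, hk⟩ := (Nat.modEq_iff_dvd' hba).mp h.symm
  have hsplit : x ^ a - x ^ b = x ^ b * (x ^ (a - b) - 1) := by
    rw [mul_sub, ← pow_add, Nat.add_sub_cancel' hba, mul_one]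
  rw [hsplit, hk]
  exact dvd_mul_of_dvd_right (pow_one_sub_dvd_pow_mul_sub_one x n k) _

-- If `N` is not a unit mod `n`, then `orderOf (N : ZMod n) = 0` and the right side is `0`.
theorem X_pow_sub_one_dvd_X_pow_pow_orderOf_sub_X (R : Type*) [CommRing R] (N n : ℕ) :
    (X ^ n - 1 : R[X]) ∣ X ^ N ^ orderOf (N : ZMod n) - X := by
  have h : N ^ orderOf (N : ZMod n) ≡ 1 [MOD n] := by
    rw [← ZMod.natCast_eq_natCast_iff, Nat.cast_pow, pow_orderOf_eq_one, Nat.cast_one]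
  simpa using pow_sub_one_dvd_pow_sub_pow_of_modEq (X : R[X]) h

theorem Irreducible.natDegree_dvd_orderOf_of_dvd_X_pow_sub_one {K : Type*} [Field K] {q : K[X]}
    (hq : Irreducible q) {n : ℕ} (h : q ∣ X ^ n - 1) :
    q.natDegree ∣ orderOf (Nat.card K : ZMod n) :=
  hq.natDegree_dvd_of_dvd_X_pow_card_pow_sub_X
    (h.trans (X_pow_sub_one_dvd_X_pow_pow_orderOf_sub_X K _ n))

-- The `max` covers `p = ℓ`, where `orderOf (ℓ : ZMod p) = orderOf 0 = 0`.
theorem natDegree_le_max_orderOf_one_of_dvd_X_pow_sub_one {ℓ p : ℕ} [Fact ℓ.Prime]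
    (hp : p.Prime) {q : (ZMod ℓ)[X]} (hq : Irreducible q) (h : q ∣ X ^ p - 1) :
    q.natDegree ≤ max (orderOf (ℓ : ZMod p)) 1 := by
  rcases eq_or_ne p ℓ with rfl | hpℓ
  · have hX : (X ^ p - 1 : (ZMod p)[X]) = (X - C 1) ^ p := by
      rw [sub_pow_char, C_1, one_pow]
    rw [hX] at h
    calc q.natDegree ≤ (X - C 1 : (ZMod p)[X]).natDegree :=
          natDegree_le_of_dvd (hq.prime.dvd_of_dvd_pow h) (X_sub_C_ne_zero 1)
      _ = 1 := natDegree_X_sub_C 1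
      _ ≤ _ := le_max_right _ _
  · have := Fact.mk hp
    have hunit : (ℓ : ZMod p) ≠ 0 := by
      rw [Ne, ZMod.natCast_eq_zero_iff, Nat.prime_dvd_prime_iff_eq hp Fact.out]
      exact hpℓ
    have hpos : 0 < orderOf (ℓ : ZMod p) :=
      orderOf_pos_iff.mpr <| isOfFinOrder_iff_pow_eq_one.mpr
        ⟨p - 1, by have := hp.two_le; omega, ZMod.pow_card_sub_one_eq_one hunit⟩
    have hdvd := hq.natDegree_dvd_orderOf_of_dvd_X_pow_sub_one h
    rw [Nat.card_zmod] at hdvd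
    exact (Nat.le_of_dvd hpos hdvd).trans (le_max_left _ _)

theorem exists_dvd_natDegree_mem_Icc {K : Type*} [Field K] {a b : ℝ} (ha : 0 ≤ a)
    (hab : 2 * a ≤ b) {m : K[X]} (hm : m ≠ 0) (ham : a ≤ m.natDegree)
    (hfac : ∀ q, Irreducible q → q ∣ m → (q.natDegree : ℝ) ≤ b) :
    ∃ c, c ∣ m ∧ a ≤ c.natDegree ∧ (c.natDegree : ℝ) ≤ b := by
  induction hn : m.natDegree using Nat.strong_induction_on generalizing m with
  | _ n ih =>
    by_cases hmb : (m.natDegree : ℝ) ≤ b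
    · exact ⟨m, dvd_rfl, ham, hmb⟩
    have hunit : ¬IsUnit m := not_isUnit_of_natDegree_pos m (by
      have : (0 : ℝ) < m.natDegree := by linarith
      exact_mod_cast this)
    obtain ⟨q, hq, m', rfl⟩ := WfDvdMonoid.exists_irreducible_factor hunit hm
    have hm' : m' ≠ 0 := right_ne_zero_of_mul hm
    have hdeg := natDegree_mul hq.ne_zero hm'
    by_cases ham' : a ≤ m'.natDegree
    · have hlt : m'.natDegree < n := by
        have := hq.natDegree_pos
        omega
      obtain ⟨c, hc, hc'⟩ := ih _ hlt hm' ham'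
        (fun r hr hrm => hfac r hr (dvd_mul_of_dvd_right hrm q)) rfl
      exact ⟨c, dvd_mul_of_dvd_right hc q, hc'⟩
    · -- dropping `q` leaves degree `< a`, so `deg q > b - a ≥ a`
      refine ⟨q, dvd_mul_right q m', ?_, hfac q hq (dvd_mul_right q m')⟩
      have hdeg' : ((q * m').natDegree : ℝ) = q.natDegree + m'.natDegree := by
        exact_mod_cast hdeg
      linarith

theorem Ideal.finrank_restrictScalars (K : Type*) {A : Type*} [Field K] [CommRing A]
    [Algebra K A] (I : Ideal A) :
    Module.finrank K (I.restrictScalars K) = Module.finrank K I :=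
  ((Submodule.restrictScalarsEquiv K A A I).restrictScalars K).finrank_eq

theorem Ideal.finrank_mono {K A : Type*} [Field K] [CommRing A] [Algebra K A]
    [Module.Finite K A] {I J : Ideal A} (h : I ≤ J) :
    Module.finrank K I ≤ Module.finrank K J := by
  rw [← I.finrank_restrictScalars K, ← J.finrank_restrictScalars K]
  exact Submodule.finrank_mono fun _ hx => h hx

theorem finrank_span_mk_eq_natDegree {K : Type*} [Field K] {m g c : K[X]} (hg : g ≠ 0)
    (hm : m = g * c) :
    Module.finrank K (Ideal.span {Ideal.Quotient.mk (Ideal.span {m}) g}) = c.natDegree := by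
  let ψ : K[X] →ₗ[K] K[X] ⧸ Ideal.span {m} :=
    (Ideal.Quotient.mkₐ K (Ideal.span {m})).toLinearMap ∘ₗ LinearMap.mulLeft K g
  have hker : LinearMap.ker ψ = (Ideal.span {c}).restrictScalars K := by
    ext u
    change Ideal.Quotient.mk _ (g * u) = 0 ↔ u ∈ Ideal.span {c}
    rw [Ideal.Quotient.eq_zero_iff_mem, Ideal.mem_span_singleton, Ideal.mem_span_singleton, hm,
      mul_dvd_mul_iff_left hg]
  have hrange : LinearMap.range ψ =
      (Ideal.span {Ideal.Quotient.mk (Ideal.span {m}) g}).restrictScalars K := by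
    ext x
    simp [ψ, Ideal.mem_span_singleton', Ideal.Quotient.mk_surjective.exists, mul_comm]
  calc Module.finrank K (Ideal.span {Ideal.Quotient.mk (Ideal.span {m}) g})
      = Module.finrank K (LinearMap.range ψ) := by
        rw [hrange, Ideal.finrank_restrictScalars]
    _ = Module.finrank K (K[X] ⧸ (Ideal.span {c}).restrictScalars K) := by
        rw [← hker]
        exact ψ.quotKerEquivRange.finrank_eq.symm
    _ = c.natDegree := by
        rw [(Submodule.Quotient.restrictScalarsEquiv K _).finrank_eq,
          finrank_quotient_span_eq_natDegree]

section GeomSum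

variable {K : Type*} [Field K] {n : ℕ}

theorem support_C_mul_geom_sum {a : K} (ha : a ≠ 0) :
    (C a * ∑ i ∈ Finset.range n, (X : K[X]) ^ i).support = Finset.range n := by
  ext k
  simp [Finset.mul_sum, coeff_C_mul, coeff_X_pow, ha]

theorem exists_eq_C_mul_geom_sum_of_mem_span {f : K[X]} (hf : f.natDegree < n)
    (hmem : Ideal.Quotient.mk (Ideal.span {X ^ n - 1}) f ∈
      Ideal.span {Ideal.Quotient.mk (Ideal.span {X ^ n - 1}) (∑ i ∈ Finset.range n, X ^ i)}) :
    ∃ a, f = C a * ∑ i ∈ Finset.range n, X ^ i := by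
  set Φ := ∑ i ∈ Finset.range n, (X : K[X]) ^ i
  have hΦ : Φ * (X - C 1) = X ^ n - 1 := by rw [C_1]; exact geom_sum_mul X n
  obtain ⟨v, hv⟩ := Ideal.mem_span_singleton'.mp hmem
  obtain ⟨v, rfl⟩ := Ideal.Quotient.mk_surjective v
  rw [← map_mul, Ideal.Quotient.mk_eq_mk_iff_sub_mem, Ideal.mem_span_singleton] at hv
  obtain ⟨w, hw⟩ := hv
  set u := v - (X - C 1) * w
  have hfu : f = Φ * u := by
    rw [← hΦ] at hw
    linear_combination -hw
  have hΦ0 : Φ ≠ 0 := by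
    rintro h
    rw [h, zero_mul, eq_comm, sub_eq_zero] at hΦ
    have : n = 0 := by simpa using congrArg natDegree hΦ
    omega
  have hΦdeg : Φ.natDegree + 1 = n := by
    have h := congrArg natDegree hΦ
    rwa [natDegree_mul hΦ0 (X_sub_C_ne_zero 1), natDegree_X_sub_C, ← C_1,
      natDegree_X_pow_sub_C] at h
  have hu : u.natDegree = 0 := by
    rcases eq_or_ne u 0 with hu0 | hu0
    · rw [hu0, natDegree_zero]
    · have := natDegree_mul hΦ0 hu0
      rw [← hfu] at this
      omega
  exact ⟨u.coeff 0, hfu.trans (by rw [mul_comm, ← eq_C_of_natDegree_eq_zero hu])⟩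

end GeomSum

theorem good_cyclic_codes_of_weak_uncertainty_general (ℓ : ℕ) (hℓ : ℓ.Prime)
    (ε δ : ℝ) (hε : 0 < ε) (hεδ : ε < δ) (hδ : δ < 1)
    (P : Set ℕ) (hPprime : ∀ p ∈ P, p.Prime)
    (hup : ∀ p ∈ P, ∀ f : Polynomial (ZMod ℓ), f ≠ 0 → f.natDegree < p →
      δ * p < (f.support.card : ℝ) +
        (Module.finrank (ZMod ℓ)
          (Ideal.span {Ideal.Quotient.mk
            (Ideal.span {(X : Polynomial (ZMod ℓ)) ^ p - 1}) f}) : ℝ))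
    (hord : ∀ p ∈ P, (orderOf ((ℓ : ZMod p)) : ℝ) < ε * p) :
    ∀ p ∈ P, ∃ I : Ideal (Polynomial (ZMod ℓ) ⧸
        Ideal.span {(X : Polynomial (ZMod ℓ)) ^ p - 1}),
      ε * p / 2 ≤ (Module.finrank (ZMod ℓ) I : ℝ) ∧
      ∀ g : Polynomial (ZMod ℓ), g.natDegree < p →
        Ideal.Quotient.mk (Ideal.span {(X : Polynomial (ZMod ℓ)) ^ p - 1}) g ∈ I →
        g ≠ 0 → (δ - ε) * p < (g.support.card : ℝ) := by
  intro p hp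
  have := Fact.mk hℓ
  have hp0 : 0 < p := (hPprime p hp).pos
  have hmdeg : (X ^ p - 1 : (ZMod ℓ)[X]).natDegree = p := by
    rw [← C_1, natDegree_X_pow_sub_C]
  have hm : (X ^ p - 1 : (ZMod ℓ)[X]) ≠ 0 := ne_zero_of_natDegree_gt (hmdeg.symm ▸ hp0)
  have : Module.Finite (ZMod ℓ) ((ZMod ℓ)[X] ⧸ Ideal.span {(X ^ p - 1 : (ZMod ℓ)[X])}) :=
    Module.finite_of_finrank_pos (by rwa [finrank_quotient_span_eq_natDegree, hmdeg])
  rcases le_or_gt 1 (ε * p) with hεp | hεp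
  · have hfac (q : (ZMod ℓ)[X]) (hq : Irreducible q) (hqm : q ∣ X ^ p - 1) :
        (q.natDegree : ℝ) ≤ ε * p := by
      have := natDegree_le_max_orderOf_one_of_dvd_X_pow_sub_one (hPprime p hp) hq hqm
      exact (Nat.cast_le.mpr this).trans (by push_cast; exact max_le (hord p hp).le hεp)
    obtain ⟨c, ⟨g, hcg⟩, hc⟩ := exists_dvd_natDegree_mem_Icc (a := ε * p / 2) (b := ε * p)
      (by positivity) (by linarith) hm (by rw [hmdeg]; nlinarith) hfac
    have hdim := finrank_span_mk_eq_natDegree (right_ne_zero_of_mul (hcg ▸ hm))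
      (hcg.trans (mul_comm c g))
    refine ⟨Ideal.span {Ideal.Quotient.mk _ g}, hdim ▸ hc.1, fun f hdeg hmem hf => ?_⟩
    have hmono := Ideal.finrank_mono (K := ZMod ℓ) ((Ideal.span_singleton_le_iff_mem _).mpr hmem)
    have : (Module.finrank (ZMod ℓ) (Ideal.span {Ideal.Quotient.mk _ f}) : ℝ) ≤ ε * p :=
      (Nat.cast_le.mpr (hdim ▸ hmono)).trans hc.2
    linarith [hup p hp f hf hdeg]
  · have hΦ := geom_sum_mul (X : (ZMod ℓ)[X]) p
    refine ⟨Ideal.span {Ideal.Quotient.mk _ (∑ i ∈ Finset.range p, X ^ i)}, ?_,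
      fun f hdeg hmem hf => ?_⟩
    · rw [finrank_span_mk_eq_natDegree (left_ne_zero_of_mul (hΦ ▸ hm)) hΦ.symm, ← C_1,
        natDegree_X_sub_C]
      push_cast
      linarith
    · obtain ⟨a, rfl⟩ := exists_eq_C_mul_geom_sum_of_mem_span hdeg hmem
      rw [support_C_mul_geom_sum (by rintro rfl; simp at hf), Finset.card_range]
      have : (0 : ℝ) < p := by exact_mod_cast hp0
      nlinarith

/-- If `F = F_ℓ` satisfies the `(ε,δ)`-uncertainty principle along an infinite set `P` of
primes (i.e. for `p ∈ P`, `wt(f) + dim I_f > δp` for every nonzero `f`, and `ord_p ℓ < εp`),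
then for each `p ∈ P` there is an ideal `I_p` of `F[X]/(X^p-1)` of dimension `≥ εp/2` all
of whose nonzero elements have weight `> (δ-ε)p`: an infinite family of good cyclic codes. -/
theorem good_cyclic_codes_of_weak_uncertainty (ℓ : ℕ) (hℓ : ℓ.Prime)
    (ε δ : ℝ) (hε : 0 < ε) (hεδ : ε < δ) (hδ : δ < 1)
    (P : Set ℕ) (hPinf : P.Infinite) (hPprime : ∀ p ∈ P, p.Prime)
    (hup : ∀ p ∈ P, ∀ f : Polynomial (ZMod ℓ), f ≠ 0 → f.natDegree < p →
      δ * p < (f.support.card : ℝ) +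
        (Module.finrank (ZMod ℓ)
          (Ideal.span {Ideal.Quotient.mk
            (Ideal.span {(X : Polynomial (ZMod ℓ)) ^ p - 1}) f}) : ℝ))
    (hord : ∀ p ∈ P, (orderOf ((ℓ : ZMod p)) : ℝ) < ε * p) :
    ∀ p ∈ P, ∃ I : Ideal (Polynomial (ZMod ℓ) ⧸
        Ideal.span {(X : Polynomial (ZMod ℓ)) ^ p - 1}),
      ε * p / 2 ≤ (Module.finrank (ZMod ℓ) I : ℝ) ∧
      ∀ g : Polynomial (ZMod ℓ), g.natDegree < p →
        Ideal.Quotient.mk (Ideal.span {(X : Polynomial (ZMod ℓ)) ^ p - 1}) g ∈ I →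
        g ≠ 0 → (δ - ε) * p < (g.support.card : ℝ) :=
  good_cyclic_codes_of_weak_uncertainty_general ℓ hℓ ε δ hε hεδ hδ P hPprime hup hord
end

section
/- Let p be a prime, F a field containing a primitive p-th root of unity ξ. Then the following are equivalent: (a) for all subsets A, B ⊆ {0,...,p-1} with |A| = |B|, the minor (ξ^{ij})_{i∈A, j∈B} of the Vandermonde matrix has nonzero determinant; (b) for every nonzero f ∈ F[X] of degree < p, wt(f) + #{0 ≤ i ≤ p-1 : f(ξ^i) ≠ 0} ≥ p + 1. -/
/-!
For any matrix `M`, a nonzero vector `v` supported on `B` whose image `M v` vanishes on `A`,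
with `|A| = |B| = k`, is the same thing as a kernel vector of the minor `M[A, B]`. Taking
`B = supp v` and `A` inside the zero set of `M v`, all square minors are nonsingular exactly
when no nonzero `v` has `#supp v + #supp (M v) ≤ #rows`. For the Vandermonde matrix
`(ξ^{ij})`, the vector `v` is the coefficient vector of a polynomial `f` of degree `< p` and
`M v` is the vector of values `f(ξ^i)`.
-/

open Polynomial Finset Matrix

namespace Matrix

variable {l m n K : Type*} [Fintype n] [LinearOrder n] [Field K]

theorem submatrix_orderEmbOfFin_mulVec_comp {k : ℕ} {B : Finset n} (hB : B.card = k)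
    (M : Matrix m n K) (r : l → m) {v : n → K} (hv : Function.support v ⊆ B) :
    M.submatrix r (B.orderEmbOfFin hB) *ᵥ (v ∘ B.orderEmbOfFin hB) = (M *ᵥ v) ∘ r := by
  ext i
  calc ∑ j, M (r i) (B.orderEmbOfFin hB j) * v (B.orderEmbOfFin hB j)
      = ∑ j ∈ B, M (r i) j * v j := by
        conv_rhs => rw [← map_orderEmbOfFin_univ B hB, Finset.sum_map]
        rfl
    _ = ∑ j, M (r i) j * v j :=
        Finset.sum_subset (subset_univ B) fun j _ hj => by
          rw [Function.notMem_support.mp fun h => hj (hv h), mul_zero]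

variable [LinearOrder m]

theorem det_submatrix_orderEmbOfFin_eq_zero_iff (M : Matrix m n K) {k : ℕ} {A : Finset m}
    {B : Finset n} (hA : A.card = k) (hB : B.card = k) :
    (M.submatrix (A.orderEmbOfFin hA) (B.orderEmbOfFin hB)).det = 0 ↔
      ∃ v : n → K, v ≠ 0 ∧ Function.support v ⊆ B ∧ ∀ i ∈ A, (M *ᵥ v) i = 0 := by
  set a := A.orderEmbOfFin hA
  set b := B.orderEmbOfFin hB
  rw [← exists_mulVec_eq_zero_iff]
  constructor
  · rintro ⟨w, hw, hMw⟩
    set v := Function.extend b w 0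
    have hvb : v ∘ b = w := funext (b.injective.extend_apply w 0)
    have hv : Function.support v ⊆ B := fun j hj => by
      by_contra hjB
      rw [← range_orderEmbOfFin B hB] at hjB
      exact hj (Function.extend_apply' _ _ _ fun ⟨i, hi⟩ => hjB ⟨i, hi⟩)
    refine ⟨v, fun h => hw (by rw [← hvb, h]; rfl), hv, fun i hi => ?_⟩
    rw [← mem_coe, ← range_orderEmbOfFin A hA] at hi
    obtain ⟨i, rfl⟩ := hi
    rw [← hvb, submatrix_orderEmbOfFin_mulVec_comp hB M a hv] at hMw
    exact congrFun hMw i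
  · rintro ⟨v, hv0, hv, hMv⟩
    refine ⟨v ∘ b, fun h => hv0 ?_, ?_⟩
    · ext j
      by_contra hj
      obtain ⟨j, rfl⟩ : j ∈ Set.range b := by rw [range_orderEmbOfFin]; exact hv hj
      exact hj (congrFun h j)
    · rw [submatrix_orderEmbOfFin_mulVec_comp hB M a hv]
      exact funext fun i => hMv _ (orderEmbOfFin_mem A hA i)

theorem forall_det_submatrix_orderEmbOfFin_ne_zero_iff [Fintype m] [DecidableEq K]
    (M : Matrix m n K) :
    (∀ (k : ℕ) (A : Finset m) (B : Finset n) (hA : A.card = k) (hB : B.card = k),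
      (M.submatrix (A.orderEmbOfFin hA) (B.orderEmbOfFin hB)).det ≠ 0) ↔
    ∀ v : n → K, v ≠ 0 →
      Fintype.card m + 1 ≤ #{j | v j ≠ 0} + #{i | (M *ᵥ v) i ≠ 0} := by
  have card_zeros_add (v : n → K) :
      #{i | (M *ᵥ v) i = 0} + #{i | (M *ᵥ v) i ≠ 0} = Fintype.card m :=
    card_filter_add_card_filter_not _
  constructor
  · intro hminors v hv
    by_contra! hsmall
    obtain ⟨A, hAzeros, hA⟩ :=
      exists_subset_card_eq (s := {i | (M *ᵥ v) i = 0}) (n := #{j | v j ≠ 0})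
        (by have := card_zeros_add v; omega)
    refine hminors _ A _ hA rfl ((det_submatrix_orderEmbOfFin_eq_zero_iff M hA rfl).mpr
      ⟨v, hv, fun j hj => by simpa using hj, fun i hi => (mem_filter.mp (hAzeros hi)).2⟩)
  · intro huncertain k A B hA hB hdet
    obtain ⟨v, hv, hvB, hMvA⟩ := (det_submatrix_orderEmbOfFin_eq_zero_iff M hA hB).mp hdet
    have hsupp : #{j | v j ≠ 0} ≤ k := hB ▸ card_le_card fun j hj => hvB (by simpa using hj)
    have hzeros : k ≤ #{i | (M *ᵥ v) i = 0} :=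
      hA ▸ card_le_card fun i hi => mem_filter.mpr ⟨mem_univ i, hMvA i hi⟩
    have := huncertain v hv
    have := card_zeros_add v
    omega

end Matrix

namespace Polynomial

variable {R : Type*} [CommRing R] {n : ℕ}

theorem card_filter_degreeLTEquiv_ne_zero [DecidableEq R] (f : degreeLT R n) :
    #{i | degreeLTEquiv R n f i ≠ 0} = #(f : R[X]).support := by
  rw [← card_map Fin.valEmbedding]
  congr 1
  ext j
  simp only [mem_map, mem_filter, mem_univ, true_and, Fin.valEmbedding_apply, mem_support_iff]
  refine ⟨fun ⟨i, hi, hij⟩ => hij ▸ hi, fun hj => ⟨⟨j, ?_⟩, hj, rfl⟩⟩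
  by_contra! hnj
  exact hj (coeff_eq_zero_of_degree_lt ((mem_degreeLT.mp f.2).trans_le (by exact_mod_cast hnj)))

theorem vandermonde_mulVec_degreeLTEquiv (x : Fin n → R) (f : degreeLT R n) :
    vandermonde x *ᵥ degreeLTEquiv R n f = fun i => (f : R[X]).eval (x i) := by
  ext i
  simp only [eval_eq_sum_degreeLTEquiv f.2, Matrix.mulVec, dotProduct, vandermonde_apply,
    mul_comm]

theorem forall_vandermonde_mulVec_iff [DecidableEq R] (x : Fin n → R) (N : ℕ) :
    (∀ v : Fin n → R, v ≠ 0 →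
      N ≤ #{j | v j ≠ 0} + #{i | (vandermonde x *ᵥ v) i ≠ 0}) ↔
    ∀ f : R[X], f ≠ 0 → f.natDegree < n → N ≤ #f.support + #{i | f.eval (x i) ≠ 0} := by
  have transfer (f : degreeLT R n) :
      #{j | degreeLTEquiv R n f j ≠ 0} + #{i | (vandermonde x *ᵥ degreeLTEquiv R n f) i ≠ 0}
        = #(f : R[X]).support + #{i | (f : R[X]).eval (x i) ≠ 0} := by
    rw [card_filter_degreeLTEquiv_ne_zero, vandermonde_mulVec_degreeLTEquiv]
  constructor
  · intro h f hf hdeg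
    have hmem : f ∈ degreeLT R n := mem_degreeLT.mpr ((natDegree_lt_iff_degree_lt hf).mp hdeg)
    have := h (degreeLTEquiv R n ⟨f, hmem⟩) (by simpa using hf)
    rwa [transfer] at this
  · intro h v hv
    obtain ⟨f, rfl⟩ := (degreeLTEquiv R n).surjective v
    rw [transfer]
    have hf : (f : R[X]) ≠ 0 := by simpa using hv
    exact h f hf ((natDegree_lt_iff_degree_lt hf).mpr (mem_degreeLT.mp f.2))

end Polynomial

theorem chebotarev_iff_uncertainty_general (p : ℕ) (F : Type*) [Field F]
    (ξ : F) :
    (∀ (k : ℕ) (A B : Finset (Fin p)) (hA : A.card = k) (hB : B.card = k),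
      Matrix.det (fun i j : Fin k =>
        ξ ^ ((A.orderEmbOfFin hA i : ℕ) * (B.orderEmbOfFin hB j : ℕ))) ≠ 0) ↔
    (∀ f : Polynomial F, f ≠ 0 → f.natDegree < p →
      p + 1 ≤ f.support.card + {i : Fin p | f.eval (ξ ^ (i : ℕ)) ≠ 0}.ncard) := by
  classical
  have key :=
    forall_det_submatrix_orderEmbOfFin_ne_zero_iff (vandermonde fun i : Fin p => ξ ^ (i : ℕ))
  rw [Fintype.card_fin, forall_vandermonde_mulVec_iff] at key
  simp only [pow_mul, Set.ncard_eq_toFinset_card', Set.toFinset_ofPred]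
  exact key

/-- For a prime `p` and a field `F` containing a primitive `p`-th root of unity `ξ`,
Chebotarev's property — every square minor of the Vandermonde matrix `(ξ^{ij})` is
invertible — is equivalent to the uncertainty principle over `F` for `p`:
`wt(f) + #{i : f(ξ^i) ≠ 0} ≥ p + 1` for every nonzero `f` of degree `< p`. -/
theorem chebotarev_iff_uncertainty (p : ℕ) (hp : p.Prime) (F : Type*) [Field F]
    (ξ : F) (hξ : IsPrimitiveRoot ξ p) :
    (∀ (k : ℕ) (A B : Finset (Fin p)) (hA : A.card = k) (hB : B.card = k),
      Matrix.det (fun i j : Fin k =>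
        ξ ^ ((A.orderEmbOfFin hA i : ℕ) * (B.orderEmbOfFin hB j : ℕ))) ≠ 0) ↔
    (∀ f : Polynomial F, f ≠ 0 → f.natDegree < p →
      p + 1 ≤ f.support.card + {i : Fin p | f.eval (ξ ^ (i : ℕ)) ≠ 0}.ncard) :=
  chebotarev_iff_uncertainty_general p F ξ
end

section
/- Let p be a prime and ξ = e^{2πi/p} ∈ ℂ. Then every square submatrix of the Vandermonde matrix V = (ξ^{ij})_{0 ≤ i,j ≤ p-1} is invertible: for all A, B ⊆ {0,...,p-1} with |A| = |B|, det((ξ^{ij})_{i∈A, j∈B}) ≠ 0. -/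
/-!
Frenkel's argument. Let `F(X) = det ((1 + X) ^ (a i * b j)) ∈ ℤ[X]`, so that the minor is
`F(ξ - 1)`. Since `(1 + X) ^ n = ∑ₗ nˡ log (1 + X) ˡ / l!` and `log (1 + X) ˡ` has order `l`,
multiplying by the inverse of the Vandermonde matrix of the `a i` leaves a matrix whose `l`-th row
is divisible by `Xˡ`, with `Xˡ`-coefficient `(b j)ˡ / l!`. Hence `F = X ^ (k(k-1)/2) * G` with
`G(0) * ∏ l! = V(a) V(b)`, a product of differences of residues mod `p`, so `p ∤ G(0)`.
On the other hand, if `F(ξ - 1) = 0` then `G(ξ - 1) = 0`, so the minimal polynomial `Φₚ(X + 1)` of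
`ξ - 1` divides `G`, and `p = Φₚ(1)` divides `G(0)`.
-/

open Polynomial Matrix Finset
open scoped Nat

namespace Chebotarev

/-- The truncation to degree `N` of `log (1 + X) ^ l / l! = ∑ₘ s(m, l) Xᵐ / m!`, where the
Stirling numbers of the first kind `s(m, l)` are the coefficients of `descPochhammer`. -/
noncomputable def stirlingPoly (N l : ℕ) : ℚ[X] :=
  ∑ m ∈ range (N + 1), monomial m ((descPochhammer ℚ m).coeff l / m !)

theorem coeff_stirlingPoly (N l m : ℕ) :
    (stirlingPoly N l).coeff m = if m ≤ N then (descPochhammer ℚ m).coeff l / m ! else 0 := by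
  simp [stirlingPoly, coeff_monomial]

theorem coeff_stirlingPoly_of_lt {N l m : ℕ} (h : m < l) : (stirlingPoly N l).coeff m = 0 := by
  rw [coeff_stirlingPoly, coeff_eq_zero_of_natDegree_lt (by rwa [descPochhammer_natDegree]),
    zero_div, ite_self]

theorem X_pow_dvd_stirlingPoly {N l m : ℕ} (h : m ≤ l) : X ^ m ∣ stirlingPoly N l :=
  X_pow_dvd_iff.2 fun _ hd => coeff_stirlingPoly_of_lt (hd.trans_le h)

theorem coeff_stirlingPoly_self {N l : ℕ} (h : l ≤ N) :
    (stirlingPoly N l).coeff l = (l ! : ℚ)⁻¹ := by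
  have hl := (monic_descPochhammer ℚ l).coeff_natDegree
  rw [descPochhammer_natDegree] at hl
  rw [coeff_stirlingPoly, if_pos h, hl, one_div]

theorem X_add_one_pow_eq_sum_stirlingPoly {N n : ℕ} (hn : n ≤ N) :
    (X + 1 : ℚ[X]) ^ n = ∑ l ∈ range (N + 1), C ((n : ℚ) ^ l) * stirlingPoly N l := by
  ext m
  simp_rw [coeff_X_add_one_pow, finsetSum_coeff, coeff_C_mul, coeff_stirlingPoly]
  split_ifs with hm
  · have hdeg : (descPochhammer ℚ m).natDegree < N + 1 := by
      rw [descPochhammer_natDegree]; omega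
    rw [Nat.cast_choose_eq_descPochhammer_div, eval_eq_sum_range' hdeg, sum_div]
    exact sum_congr rfl fun l _ => by ring
  · rw [Nat.choose_eq_zero_of_lt (by omega)]
    simp

theorem exists_det_eq_X_pow_sum_mul {R n : Type*} [CommRing R] [Fintype n] [DecidableEq n]
    (P : Matrix n n R[X]) (e : n → ℕ) (h : ∀ i j, X ^ e i ∣ P i j) :
    ∃ Q : R[X], P.det = X ^ (∑ i, e i) * Q ∧
      Q.coeff 0 = (of fun i j => (P i j).coeff (e i)).det := by
  choose P' hP' using h
  refine ⟨(of P').det, ?_, ?_⟩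
  · rw [show P = of fun i j => X ^ e i * of P' i j from ext hP', det_mul_column,
      prod_pow_eq_pow_sum]
  · rw [coeff_zero_eq_eval_zero, ← coe_evalRingHom, RingHom.map_det]
    congr 1
    ext i j
    simp [hP', coeff_X_pow_mul', coeff_zero_eq_eval_zero]

variable {k : ℕ}

theorem sum_inv_vandermonde_mul_pow {K : Type*} [Field K] {v : Fin k → K}
    (hv : Function.Injective v) (l : Fin k) {m : ℕ} (hm : m < k) :
    ∑ i, (vandermonde v)⁻¹ l i * v i ^ m = if (l : ℕ) = m then 1 else 0 := by
  have := congrFun (congrFun (nonsing_inv_mul _ (det_vandermonde_ne_zero_iff.2 hv).isUnit) l)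
    ⟨m, hm⟩
  simpa [mul_apply, vandermonde_apply, one_apply, Fin.ext_iff] using this

theorem exists_det_sum_stirlingPoly_eq_X_pow_mul {N : ℕ} (hkN : k ≤ N + 1)
    (T : Fin k → ℕ → ℚ) (hT_lt : ∀ (l : Fin k) (m : ℕ), m < l → T l m = 0)
    (hT_self : ∀ l : Fin k, T l l = 1) (u : ℕ → Fin k → ℚ) :
    ∃ Q : ℚ[X], (of fun l j => ∑ m ∈ range (N + 1), C (T l m * u m j) * stirlingPoly N m).det =
        X ^ (∑ l : Fin k, (l : ℕ)) * Q ∧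
      Q.coeff 0 * ∏ l : Fin k, ((l : ℕ)! : ℚ) = (of fun (l : Fin k) j => u l j).det := by
  have hdvd : ∀ (l : Fin k) j,
      X ^ (l : ℕ) ∣ ∑ m ∈ range (N + 1), C (T l m * u m j) * stirlingPoly N m := by
    refine fun l j => dvd_sum fun m _ => ?_
    rcases le_or_gt (l : ℕ) m with h | h
    · exact (X_pow_dvd_stirlingPoly h).mul_left _
    · simp [hT_lt l m h]
  have hcoeff : ∀ (l : Fin k) j,
      (∑ m ∈ range (N + 1), C (T l m * u m j) * stirlingPoly N m).coeff l =
        ((l : ℕ)! : ℚ)⁻¹ * (of fun (l : Fin k) j => u l j) l j := by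
    intro l j
    rw [finsetSum_coeff, sum_eq_single (l : ℕ)]
    · rw [coeff_C_mul, coeff_stirlingPoly_self (by omega), hT_self, one_mul, mul_comm]
      rfl
    · intro m _ hml
      rcases lt_or_gt_of_ne hml with h | h
      · rw [hT_lt l m h, zero_mul, C_0, zero_mul, coeff_zero]
      · rw [coeff_C_mul, coeff_stirlingPoly_of_lt h, mul_zero]
    · intro hl
      exact absurd (mem_range.2 (by omega)) hl
  obtain ⟨Q, hPQ, hQ⟩ := exists_det_eq_X_pow_sum_mul
    (of fun l j => ∑ m ∈ range (N + 1), C (T l m * u m j) * stirlingPoly N m) (fun l => l) hdvd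
  refine ⟨Q, hPQ, ?_⟩
  calc Q.coeff 0 * ∏ l : Fin k, ((l : ℕ)! : ℚ)
      = (of fun (l : Fin k) j => ((l : ℕ)! : ℚ)⁻¹ * (of fun (l : Fin k) j => u l j) l j).det *
          ∏ l : Fin k, ((l : ℕ)! : ℚ) := by
        rw [hQ]
        congr 2
        exact ext hcoeff
    _ = (of fun (l : Fin k) j => u l j).det := by
        rw [det_mul_column, prod_inv_distrib]
        field_simp

theorem exists_det_X_add_one_pow_eq_X_pow_mul_rat (a b : Fin k → ℕ) (ha : Function.Injective a) :
    ∃ Q : ℚ[X], (of fun i j => (X + 1 : ℚ[X]) ^ (a i * b j)).det =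
        X ^ (∑ l : Fin k, (l : ℕ)) * Q ∧
      Q.coeff 0 * ∏ l : Fin k, ((l : ℕ)! : ℚ) =
        (vandermonde fun i => (a i : ℚ)).det * (vandermonde fun j => (b j : ℚ)).det := by
  obtain ⟨N, hkN, hN⟩ : ∃ N, k ≤ N + 1 ∧ ∀ i j, a i * b j ≤ N := by
    obtain ⟨M, hM⟩ := Finite.exists_le fun ij : Fin k × Fin k => a ij.1 * b ij.2
    exact ⟨M + k, by omega, fun i j => (hM (i, j)).trans le_self_add⟩
  set V := vandermonde fun i => (a i : ℚ)
  have ha' : Function.Injective fun i => (a i : ℚ) := Nat.cast_injective.comp ha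
  have hV : IsUnit V.det := (det_vandermonde_ne_zero_iff.2 ha').isUnit
  set M := of fun i j => (X + 1 : ℚ[X]) ^ (a i * b j)
  set T : Fin k → ℕ → ℚ := fun l m => ∑ i, V⁻¹ l i * (a i : ℚ) ^ m
  have hVM : V⁻¹.map C * M =
      of fun l j => ∑ m ∈ range (N + 1), C (T l m * (b j : ℚ) ^ m) * stirlingPoly N m := by
    ext l j : 1
    simp_rw [mul_apply, map_apply, M, of_apply, X_add_one_pow_eq_sum_stirlingPoly (hN _ j),
      mul_sum]
    rw [sum_comm]
    refine sum_congr rfl fun m _ => ?_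
    simp only [T, sum_mul, map_sum]
    refine sum_congr rfl fun i _ => ?_
    simp only [map_mul, map_pow, map_natCast, Nat.cast_mul, mul_pow]
    ring
  obtain ⟨Q, hPQ, hQ⟩ := exists_det_sum_stirlingPoly_eq_X_pow_mul hkN T
    (fun l m hm => (sum_inv_vandermonde_mul_pow ha' l (hm.trans l.2)).trans (if_neg hm.ne'))
    (fun l => (sum_inv_vandermonde_mul_pow ha' l l.2).trans (if_pos rfl)) fun m j => (b j : ℚ) ^ m
  refine ⟨C V.det * Q, ?_, ?_⟩
  · have hPdet : (V⁻¹.map C * M).det = C V⁻¹.det * M.det := by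
      rw [det_mul, RingHom.map_det]
      rfl
    rw [mul_left_comm, ← hPQ, ← hVM, hPdet, ← mul_assoc, ← C_mul, ← det_mul, mul_nonsing_inv _ hV,
      det_one, C_1, one_mul]
  · rw [coeff_C_mul, mul_assoc, hQ, ← det_transpose (vandermonde fun j => (b j : ℚ))]
    rfl

theorem exists_det_X_add_one_pow_eq_X_pow_mul (a b : Fin k → ℕ) (ha : Function.Injective a) :
    ∃ G : ℤ[X], (of fun i j => (X + 1 : ℤ[X]) ^ (a i * b j)).det =
        X ^ (∑ l : Fin k, (l : ℕ)) * G ∧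
      G.coeff 0 * ∏ l : Fin k, ((l : ℕ)! : ℤ) =
        (vandermonde fun i => (a i : ℤ)).det * (vandermonde fun j => (b j : ℤ)).det := by
  obtain ⟨Q, hQ, hQ0⟩ := exists_det_X_add_one_pow_eq_X_pow_mul_rat a b ha
  set F := (of fun i j => (X + 1 : ℤ[X]) ^ (a i * b j)).det
  have hF : F.map (Int.castRingHom ℚ) = (of fun i j => (X + 1 : ℚ[X]) ^ (a i * b j)).det := by
    rw [← coe_mapRingHom, RingHom.map_det]
    congr 1
    ext
    simp
  obtain ⟨G, hG⟩ : X ^ (∑ l : Fin k, (l : ℕ)) ∣ F := by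
    rw [← map_dvd_map (Int.castRingHom ℚ) (RingHom.injective_int _) (monic_X_pow _),
      Polynomial.map_pow, map_X, hF, hQ]
    exact dvd_mul_right _ _
  have hGQ : G.map (Int.castRingHom ℚ) = Q := by
    apply mul_left_cancel₀ (pow_ne_zero (∑ l : Fin k, (l : ℕ)) X_ne_zero)
    rw [← hQ, ← hF, hG, Polynomial.map_mul, Polynomial.map_pow, map_X]
  refine ⟨G, hG, Int.cast_injective (α := ℚ) ?_⟩
  rw [← hGQ, coeff_map] at hQ0
  simpa [det_vandermonde] using hQ0

theorem prime_dvd_coeff_zero_of_aeval_sub_one_eq_zero {K : Type*} [Field K] [CharZero K] {p : ℕ}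
    (hp : p.Prime) {ξ : K} (hξ : IsPrimitiveRoot ξ p) {G : ℤ[X]} (hG : aeval (ξ - 1) G = 0) :
    (p : ℤ) ∣ G.coeff 0 := by
  have := Fact.mk hp
  have hdvd : cyclotomic p ℤ ∣ G.comp (X - 1) := by
    rw [cyclotomic_eq_minpoly hξ hp.pos]
    exact minpoly.isIntegrallyClosed_dvd (hξ.isIntegral hp.pos) (by simp [aeval_comp, hG])
  obtain ⟨H, hH⟩ := hdvd
  have := congrArg (eval 1) hH
  rw [eval_comp, eval_mul, eval_one_cyclotomic_prime] at this
  simp only [eval_sub, eval_X, eval_one, sub_self] at this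
  exact ⟨_, by rw [coeff_zero_eq_eval_zero, this]⟩

theorem not_prime_dvd_det_vandermonde {p : ℕ} (hp : p.Prime) {c : Fin k → Fin p}
    (hc : Function.Injective c) : ¬ (p : ℤ) ∣ (vandermonde fun i => ((c i : ℕ) : ℤ)).det := by
  rw [det_vandermonde, (Nat.prime_iff_prime_int.1 hp).dvd_finsetProd_iff]
  rintro ⟨i, -, hi⟩
  obtain ⟨j, hj, hij⟩ := (Nat.prime_iff_prime_int.1 hp).dvd_finsetProd_iff _ |>.1 hi
  have hne : ((c j : ℕ) : ℤ) - (c i : ℕ) ≠ 0 :=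
    sub_ne_zero.2 (Nat.cast_injective.ne (Fin.val_injective.ne (hc.ne (mem_Ioi.1 hj).ne')))
  have hlt : |((c j : ℕ) : ℤ) - (c i : ℕ)| < p := by
    have := (c i).2
    have := (c j).2
    rw [abs_lt]
    omega
  exact hne (Int.eq_zero_of_abs_lt_dvd hij hlt)

theorem det_pow_mul_ne_zero {K : Type*} [Field K] [CharZero K] {p : ℕ} (hp : p.Prime) {ξ : K}
    (hξ : IsPrimitiveRoot ξ p) {a b : Fin k → Fin p} (ha : Function.Injective a)
    (hb : Function.Injective b) : (of fun i j => ξ ^ ((a i : ℕ) * (b j : ℕ))).det ≠ 0 := by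
  obtain ⟨G, hF, hG⟩ := exists_det_X_add_one_pow_eq_X_pow_mul (fun i => (a i : ℕ))
    (fun j => (b j : ℕ)) (Fin.val_injective.comp ha)
  have hFξ : aeval (ξ - 1) (of fun i j => (X + 1 : ℤ[X]) ^ ((a i : ℕ) * (b j : ℕ))).det =
      (of fun i j => ξ ^ ((a i : ℕ) * (b j : ℕ))).det := by
    rw [← AlgHom.coe_toRingHom, RingHom.map_det]
    congr 1
    ext
    simp
  intro hD
  have hξ1 : ξ - 1 ≠ 0 := sub_ne_zero.2 (hξ.ne_one hp.one_lt)
  have hGξ : aeval (ξ - 1) G = 0 := by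
    rw [← hFξ, hF, map_mul, map_pow, aeval_X] at hD
    exact (mul_eq_zero.1 hD).resolve_left (pow_ne_zero _ hξ1)
  have hpV := (prime_dvd_coeff_zero_of_aeval_sub_one_eq_zero hp hξ hGξ).mul_right
    (∏ l : Fin k, ((l : ℕ)! : ℤ))
  rw [hG] at hpV
  rcases (Nat.prime_iff_prime_int.1 hp).dvd_mul.1 hpV with h | h
  · exact not_prime_dvd_det_vandermonde hp ha h
  · exact not_prime_dvd_det_vandermonde hp hb h

end Chebotarev

/-- Chebotarev's theorem: for a prime `p` and `ξ = e^{2πi/p}`, every square submatrix of the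
Vandermonde matrix `(ξ^{ij})_{0 ≤ i,j ≤ p-1}` is invertible. -/
theorem chebotarev_vandermonde (p : ℕ) (hp : p.Prime)
    (k : ℕ) (A B : Finset (Fin p)) (hA : A.card = k) (hB : B.card = k) :
    Matrix.det (fun i j : Fin k =>
      Complex.exp (2 * Real.pi * Complex.I / p) ^
        ((A.orderEmbOfFin hA i : ℕ) * (B.orderEmbOfFin hB j : ℕ))) ≠ 0 :=
  Chebotarev.det_pow_mul_ne_zero hp (Complex.isPrimitiveRoot_exp p hp.ne_zero)
    (A.orderEmbOfFin hA).injective (B.orderEmbOfFin hB).injective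
end

section
/- Let q = 2 and let p = 2^n - 1 be a Mersenne prime; set F = F_{2^n}. For every integer k with 1 ≤ k < n, there exists a nonzero polynomial f ∈ F[X] of degree 2^n(1 - 2^{-k}) < p dividing X^p - 1, with wt(f) ≤ (n+1)^k and dim(I_f) = 2^{n-k} - 1 ≤ p/2^k. Consequently, for every δ > 0, if there exist infinitely many Mersenne primes, there exist a finite field F and a prime p with min over nonzero f of (wt(f) + dim(I_f)) ≤ δp. -/
/-!
Fix an `𝔽₂`-basis `b₀, …, b_{n-1}` of `𝔽_{2^n}` and, for `i < k`, the affine subspace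
`Aᵢ = bᵢ + span {bⱼ | j > i}` of dimension `n - 1 - i`. The `Aᵢ` are pairwise disjoint (the
first coordinate of an element of `Aᵢ` that is `1` is the `i`-th) and avoid `0`, so
`f = ∏ᵢ ∏_{a ∈ Aᵢ} (X - a)` is a product of distinct factors of `X^(2^n - 1) - 1`, of degree
`∑_{i<k} 2^(n-1-i) = 2^n - 2^(n-k)`. By Ore's lemma each `∏_{a ∈ Aᵢ} (X - a)` is a linearized
polynomial `∑_{j ≤ n-1-i} cⱼ X^(2^j)` plus a constant, so it has at most `n + 1` terms and
`wt f ≤ (n + 1)^k`. The ideal generated by `f` in `F[X]/(X^p - 1)` is isomorphic to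
`F[X]/(h)` for the cofactor `h`, of dimension `deg h = 2^(n-k) - 1`. Taking `k` with
`2^k > 4/δ` and then `n` large, both `(n + 1)^k` and `2^(n-k)` are at most `δ 2^n / 4`.
-/

open Polynomial Finset Filter

namespace Polynomial

section Linearized

noncomputable def linearized (R : Type*) [CommRing R] (q d : ℕ) : Submodule R R[X] :=
  Submodule.span R ((fun j => X ^ q ^ j) '' Set.Iic d)

variable {R : Type*} [CommRing R] {q d : ℕ} {P : R[X]}

theorem linearized_mono {d' : ℕ} (h : d ≤ d') : linearized R q d ≤ linearized R q d' :=
  Submodule.span_mono (Set.image_mono (Set.Iic_subset_Iic.2 h))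

theorem comp_X_sub_C_of_mem_linearized [ExpChar R q] (hP : P ∈ linearized R q d) (t : R) :
    P.comp (X - C t) = P - C (P.eval t) := by
  induction hP using Submodule.span_induction with
  | mem x hx =>
    obtain ⟨j, -, rfl⟩ := hx
    simp [sub_pow_expChar_pow]
  | zero => simp
  | add x y _ _ hx hy => rw [add_comp, hx, hy, eval_add, C_add]; ring
  | smul a x _ hx => rw [smul_eq_C_mul, mul_comp, C_comp, hx, eval_mul, eval_C, C_mul]; ring

theorem pow_mem_linearized [ExpChar R q] (hP : P ∈ linearized R q d) :
    P ^ q ∈ linearized R q (d + 1) := by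
  induction hP using Submodule.span_induction with
  | mem x hx =>
    obtain ⟨j, hj, rfl⟩ := hx
    exact Submodule.subset_span ⟨j + 1, by simpa using hj, by dsimp only; rw [← pow_mul, pow_succ]⟩
  | zero => rw [zero_pow (expChar_pos R q).ne']; exact zero_mem _
  | add x y _ _ hx hy => rw [add_pow_expChar]; exact add_mem hx hy
  | smul a x _ hx =>
    rw [smul_eq_C_mul, mul_pow, ← C_pow, ← smul_eq_C_mul]
    exact Submodule.smul_mem _ _ hx

theorem support_subset_of_mem_linearized (hP : P ∈ linearized R q d) :
    P.support ⊆ (range (d + 1)).image (q ^ ·) := by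
  induction hP using Submodule.span_induction with
  | mem x hx =>
    obtain ⟨j, hj, rfl⟩ := hx
    dsimp only
    rw [X_pow_eq_monomial]
    refine (support_monomial_subset _ _).trans ?_
    simpa [Nat.lt_succ_iff] using ⟨j, hj, rfl⟩
  | zero => simp
  | add x y _ _ hx hy => exact support_add.trans (union_subset hx hy)
  | smul a x _ hx => exact (support_smul a x).trans hx

theorem card_support_add_C_le_of_mem_linearized (hP : P ∈ linearized R q d) (v : R) :
    #(P + C v).support ≤ d + 2 :=
  calc #(P + C v).support ≤ #(P.support ∪ {0}) :=
        card_le_card (support_add.trans (union_subset_union_right (support_C_subset v)))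
    _ ≤ #((range (d + 1)).image (q ^ ·)) + 1 :=
        (card_union_le _ _).trans (by grw [card_singleton, support_subset_of_mem_linearized hP])
    _ ≤ d + 2 := by grw [card_image_le, card_range]

end Linearized

theorem card_support_prod_le {R ι : Type*} [CommRing R] (s : Finset ι) (g : ι → R[X]) :
    #(∏ i ∈ s, g i).support ≤ ∏ i ∈ s, #(g i).support := by
  classical
  induction s using Finset.induction with
  | empty => simpa using card_support_le_one_iff_monomial.2 ⟨0, 1, by simp⟩
  | insert a s ha hs =>
    rw [prod_insert ha, prod_insert ha]
    exact card_support_mul_le.trans (Nat.mul_le_mul_left _ hs)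

theorem prod_X_sub_C_dvd_of_injOn {K ι : Type*} [Field K] {T : Finset ι} {r : ι → K}
    {p : K[X]} (hr : Set.InjOn r T) (hroot : ∀ x ∈ T, p.IsRoot (r x)) :
    ∏ x ∈ T, (X - C (r x)) ∣ p :=
  prod_dvd_of_coprime
    (fun _ hx _ hy hxy => isCoprime_X_sub_C_of_isUnit_sub (sub_ne_zero.2 (hr.ne hx hy hxy)).isUnit)
    fun x hx => dvd_iff_isRoot.2 (hroot x hx)

theorem finrank_span_mk_of_dvd_s17 {K : Type*} [Field K] {f g : K[X]} (hg : g ≠ 0) (hfg : f ∣ g) :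
    Module.finrank K (Ideal.span {Ideal.Quotient.mk (Ideal.span {g}) f}) =
      g.natDegree - f.natDegree := by
  obtain ⟨h, rfl⟩ := hfg
  obtain ⟨hf, hh⟩ := mul_ne_zero_iff.1 hg
  set I := Ideal.span {f * h}
  set x := Ideal.Quotient.mk I f
  have htors : Ideal.torsionOf K[X] (K[X] ⧸ I) x = Ideal.span {h} := by
    ext u
    change Ideal.Quotient.mk I (u * f) = 0 ↔ _
    rw [Ideal.mem_span_singleton, Ideal.Quotient.eq_zero_iff_mem,
      Ideal.mem_span_singleton, mul_comm u, mul_dvd_mul_iff_left hf]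
  have hspan : ((Ideal.span {x}).restrictScalars K[X]).restrictScalars K =
      (K[X] ∙ x).restrictScalars K := by
    rw [Submodule.restrictScalars_span _ _ Ideal.Quotient.mk_surjective]
  rw [Submodule.restrictScalars_restrictScalars] at hspan
  rw [← ((Submodule.restrictScalarsEquiv K _ _ (Ideal.span {x})).restrictScalars K).finrank_eq,
    hspan, ((Submodule.restrictScalarsEquiv K K[X] _ _).restrictScalars K).finrank_eq,
    ← ((Ideal.quotTorsionOfEquivSpanSingleton K[X] _ x).restrictScalars K).finrank_eq, htors,
    finrank_quotient_span_eq_natDegree, natDegree_mul hf hh, Nat.add_sub_cancel_left]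

end Polynomial

theorem LinearIndependent.injective_finset_sum {R M ι : Type*} [Ring R] [Nontrivial R]
    [AddCommGroup M] [Module R M] [Fintype ι] {v : ι → M}
    (hv : LinearIndependent R v) : Function.Injective fun s : Finset ι => ∑ i ∈ s, v i := by
  classical
  intro s t hst
  have key := Fintype.linearIndependent_iffₛ.1 hv (fun i => if i ∈ s then 1 else 0)
    (fun i => if i ∈ t then 1 else 0) (by simpa [ite_smul, sum_ite_mem] using hst)
  ext i
  have := key i
  split_ifs at this with hs ht <;> simp_all

theorem Finset.eq_of_insert_eq_insert_of_forall_lt {α : Type*} [Preorder α] [DecidableEq α]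
    {i j : α} {s t : Finset α} (hs : ∀ x ∈ s, i < x) (ht : ∀ x ∈ t, j < x)
    (h : insert i s = insert j t) : i = j ∧ s = t := by
  have hij : i = j := by
    have hi : i ∈ insert j t := h ▸ mem_insert_self i s
    have hj : j ∈ insert i s := h ▸ mem_insert_self j t
    rcases mem_insert.1 hi with hi | hi
    · exact hi
    rcases mem_insert.1 hj with hj | hj
    · exact hj.symm
    exact absurd (ht i hi) (hs j hj).not_gt
  subst hij
  refine ⟨rfl, ?_⟩
  rw [← erase_insert fun hi => lt_irrefl i (hs i hi), h,
    erase_insert fun hi => lt_irrefl i (ht i hi)]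

theorem Nat.sum_range_two_pow_sub_one_sub {n k : ℕ} (hk : k ≤ n) :
    ∑ i ∈ range k, 2 ^ (n - 1 - i) = 2 ^ n - 2 ^ (n - k) := by
  induction k with
  | zero => simp
  | succ k ih =>
    rw [sum_range_succ, ih (by omega)]
    have h1 : 2 ^ (n - k) = 2 * 2 ^ (n - 1 - k) := by rw [← pow_succ']; congr 1; omega
    have h2 : 2 ^ (n - k) ≤ 2 ^ n := Nat.pow_le_pow_right two_pos (Nat.sub_le n k)
    rw [show n - (k + 1) = n - 1 - k by omega]
    omega

theorem Nat.two_pow_sub_sub_one_le_div {n k : ℕ} (hk : k ≤ n) :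
    2 ^ (n - k) - 1 ≤ (2 ^ n - 1) / 2 ^ k := by
  rw [Nat.le_div_iff_mul_le (Nat.two_pow_pos k), Nat.sub_mul, one_mul, ← pow_add,
    Nat.sub_add_cancel hk]
  have := Nat.one_le_two_pow (n := k)
  omega

section SubsetSum

variable {R ι : Type*} [CommRing R]

/-- For an `𝔽₂`-independent family `e` in characteristic `2`, this is `f_A` for the affine
space `A = t + span (e '' J)`. -/
noncomputable def subsetSumPoly (e : ι → R) (J : Finset ι) (t : R) : R[X] :=
  ∏ s ∈ J.powerset, (X - C (t + ∑ j ∈ s, e j))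

variable (e : ι → R) (J : Finset ι)

theorem subsetSumPoly_insert [DecidableEq ι] {a : ι} (ha : a ∉ J) (t : R) :
    subsetSumPoly e (insert a J) t = subsetSumPoly e J t * subsetSumPoly e J (t + e a) := by
  rw [subsetSumPoly, prod_powerset_insert ha]
  congr 1
  refine prod_congr rfl fun s hs => ?_
  rw [sum_insert fun h => ha (mem_powerset.1 hs h), add_assoc]

theorem subsetSumPoly_eq_comp (t : R) :
    subsetSumPoly e J t = (subsetSumPoly e J 0).comp (X - C t) := by
  simp only [subsetSumPoly, Polynomial.prod_comp, sub_comp, X_comp, C_comp, zero_add, C_add]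
  exact prod_congr rfl fun _ _ => by ring

theorem subsetSumPoly_monic (t : R) : (subsetSumPoly e J t).Monic :=
  monic_prod_of_monic _ _ fun _ _ => monic_X_sub_C _

theorem natDegree_subsetSumPoly [Nontrivial R] (t : R) :
    (subsetSumPoly e J t).natDegree = 2 ^ #J := by
  rw [subsetSumPoly, natDegree_prod_of_monic _ _ fun _ _ => monic_X_sub_C _]
  simp only [natDegree_X_sub_C, sum_const, card_powerset, smul_eq_mul, mul_one]

variable [CharP R 2]

/-- Ore's lemma. -/
theorem subsetSumPoly_zero_mem_linearized : subsetSumPoly e J 0 ∈ linearized R 2 #J := by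
  classical
  induction J using Finset.induction with
  | empty => exact Submodule.subset_span ⟨0, by simp, by simp [subsetSumPoly]⟩
  | insert a J ha hJ =>
    set P := subsetSumPoly e J 0
    have key : subsetSumPoly e (insert a J) 0 = P ^ 2 - P.eval (e a) • P := by
      rw [subsetSumPoly_insert e J ha, zero_add, subsetSumPoly_eq_comp e J (e a),
        comp_X_sub_C_of_mem_linearized hJ, smul_eq_C_mul]
      ring
    rw [key, card_insert_of_notMem ha]
    exact sub_mem (pow_mem_linearized hJ)
      (linearized_mono (Nat.le_succ _) (Submodule.smul_mem _ _ hJ))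

theorem card_support_subsetSumPoly_le (t : R) : #(subsetSumPoly e J t).support ≤ #J + 2 := by
  have hP := subsetSumPoly_zero_mem_linearized e J
  rw [subsetSumPoly_eq_comp, comp_X_sub_C_of_mem_linearized hP, sub_eq_add_neg, ← C_neg]
  exact card_support_add_C_le_of_mem_linearized hP _

end SubsetSum

section Flag

variable {F : Type*} [Field F] {n k : ℕ} (b : Fin n → F) (hk : k ≤ n)

/-- The product of the `f_{Aᵢ}` over the cosets `Aᵢ = b i + span {b j | j > i}`, `i < k`. -/
noncomputable def flagCosetPoly : F[X] :=
  ∏ i : Fin k, subsetSumPoly b (Ioi (i.castLE hk)) (b (i.castLE hk))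

theorem flagCosetPoly_monic : (flagCosetPoly b hk).Monic :=
  monic_prod_of_monic _ _ fun _ _ => subsetSumPoly_monic _ _ _

theorem natDegree_flagCosetPoly : (flagCosetPoly b hk).natDegree = 2 ^ n - 2 ^ (n - k) := by
  rw [flagCosetPoly, natDegree_prod_of_monic _ _ fun _ _ => subsetSumPoly_monic _ _ _]
  simp only [natDegree_subsetSumPoly, Fin.card_Ioi, Fin.val_castLE]
  rw [Fin.sum_univ_eq_sum_range (fun i => 2 ^ (n - 1 - i)), Nat.sum_range_two_pow_sub_one_sub hk]

theorem card_support_flagCosetPoly_le [CharP F 2] :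
    #(flagCosetPoly b hk).support ≤ (n + 1) ^ k := by
  refine (card_support_prod_le _ _).trans
    ((prod_le_pow_card univ _ (n + 1) fun i _ => ?_).trans_eq (by simp))
  grw [card_support_subsetSumPoly_le, Fin.card_Ioi]
  omega

theorem flagCosetPoly_eq_prod_X_sub_C : flagCosetPoly b hk =
    ∏ x ∈ univ.sigma fun i : Fin k => (Ioi (i.castLE hk)).powerset,
      (X - C (∑ j ∈ insert (x.1.castLE hk) x.2, b j)) := by
  rw [prod_sigma]
  refine prod_congr rfl fun i _ => prod_congr rfl fun s hs => ?_
  rw [sum_insert fun h => by simpa using mem_powerset.1 hs h]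

theorem flagCosetPoly_dvd_X_pow_card_sub_one [Fintype F]
    (hb : Function.Injective fun s : Finset (Fin n) => ∑ j ∈ s, b j) :
    flagCosetPoly b hk ∣ X ^ (Fintype.card F - 1) - 1 := by
  rw [flagCosetPoly_eq_prod_X_sub_C]
  have hlt : ∀ x ∈ univ.sigma fun i : Fin k => (Ioi (i.castLE hk)).powerset,
      ∀ j ∈ x.2, x.1.castLE hk < j := fun x hx j hj => by
    simpa using (mem_powerset.1 (mem_sigma.1 hx).2) hj
  refine prod_X_sub_C_dvd_of_injOn (fun x hx y hy hxy => ?_) fun x hx => ?_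
  · obtain ⟨h1, h2⟩ := eq_of_insert_eq_insert_of_forall_lt (hlt x hx) (hlt y hy) (hb hxy)
    exact Sigma.ext (Fin.castLE_injective hk h1) (heq_of_eq h2)
  · have hne : ∑ j ∈ insert (x.1.castLE hk) x.2, b j ≠ 0 := fun h0 =>
      insert_ne_empty _ _ (hb (h0.trans sum_empty.symm))
    simp [FiniteField.pow_card_sub_one_eq_one _ hne]

end Flag

theorem exists_sparse_dvd_X_pow_sub_one_of_basis {F : Type*} [Field F] [Fintype F]
    [Algebra (ZMod 2) F] {n k : ℕ} (b : Module.Basis (Fin n) (ZMod 2) F) (hk : k ≤ n) :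
    ∃ f : F[X], f ≠ 0 ∧ f.natDegree = 2 ^ n - 2 ^ (n - k) ∧ f ∣ X ^ (2 ^ n - 1) - 1 ∧
      #f.support ≤ (n + 1) ^ k ∧
      Module.finrank F
        (Ideal.span {Ideal.Quotient.mk (Ideal.span {(X : F[X]) ^ (2 ^ n - 1) - 1}) f})
        = 2 ^ (n - k) - 1 := by
  have : CharP F 2 := charP_of_injective_algebraMap (algebraMap (ZMod 2) F).injective 2
  have hcard : Fintype.card F = 2 ^ n := by simp [Module.card_fintype b]
  have hdvd := flagCosetPoly_dvd_X_pow_card_sub_one b hk b.linearIndependent.injective_finset_sum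
  rw [hcard] at hdvd
  have hp : 1 < 2 ^ n := hcard ▸ Fintype.one_lt_card
  have hne : (X : F[X]) ^ (2 ^ n - 1) - 1 ≠ 0 := X_pow_sub_C_ne_zero (by omega) 1
  refine ⟨_, (flagCosetPoly_monic b hk).ne_zero, natDegree_flagCosetPoly b hk, hdvd,
    card_support_flagCosetPoly_le b hk, ?_⟩
  have : 2 ^ (n - k) ≤ 2 ^ n := Nat.pow_le_pow_right two_pos (Nat.sub_le n k)
  rw [finrank_span_mk_of_dvd_s17 hne hdvd, natDegree_flagCosetPoly, ← C_1, natDegree_X_pow_sub_C]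
  omega

theorem GaloisField.exists_sparse_dvd_X_pow_sub_one {n k : ℕ} (hn : n ≠ 0) (hk : k ≤ n) :
    ∃ f : (GaloisField 2 n)[X], f ≠ 0 ∧ f.natDegree = 2 ^ n - 2 ^ (n - k) ∧
      f ∣ X ^ (2 ^ n - 1) - 1 ∧ #f.support ≤ (n + 1) ^ k ∧
      Module.finrank (GaloisField 2 n) (Ideal.span {Ideal.Quotient.mk
        (Ideal.span {(X : (GaloisField 2 n)[X]) ^ (2 ^ n - 1) - 1}) f}) = 2 ^ (n - k) - 1 :=
  have := Fintype.ofFinite (GaloisField 2 n)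
  exists_sparse_dvd_X_pow_sub_one_of_basis
    (Module.finBasisOfFinrankEq _ _ (GaloisField.finrank 2 hn)) hk

theorem exists_eventually_pow_add_two_pow_le {δ : ℝ} (hδ : 0 < δ) :
    ∃ k : ℕ, ∀ᶠ n : ℕ in atTop,
      k < n ∧ (((n + 1) ^ k + 2 ^ (n - k) : ℕ) : ℝ) ≤ δ * ((2 ^ n - 1 : ℕ) : ℝ) := by
  obtain ⟨k, hk⟩ := pow_unbounded_of_one_lt (4 / δ) one_lt_two
  have hsmall : Tendsto (fun n : ℕ => ((n + 1 : ℕ) : ℝ) ^ k / 2 ^ (n + 1)) atTop (nhds 0) :=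
    (tendsto_pow_const_div_const_pow_of_one_lt k one_lt_two).comp (tendsto_add_atTop_nat 1)
  refine ⟨k, ?_⟩
  filter_upwards [hsmall.eventually (gt_mem_nhds (by positivity : 0 < δ / 8)),
    eventually_gt_atTop k] with n hn hkn
  refine ⟨hkn, ?_⟩
  have h2n : (2 : ℝ) ^ (n - k) * 2 ^ k = 2 ^ n := by rw [← pow_add, Nat.sub_add_cancel hkn.le]
  have hp : ((2 ^ n - 1 : ℕ) : ℝ) = 2 ^ n - 1 := by
    rw [Nat.cast_sub Nat.one_le_two_pow]; push_cast; ring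
  have h1 : (2 : ℝ) ≤ 2 ^ n := by
    calc (2 : ℝ) = 2 ^ 1 := by norm_num
      _ ≤ 2 ^ n := pow_le_pow_right₀ one_le_two (by omega)
  rw [div_lt_iff₀ (by positivity), pow_succ] at hn
  rw [div_lt_iff₀ hδ] at hk
  push_cast at hn ⊢
  rw [hp]
  nlinarith [pow_pos (two_pos (α := ℝ)) (n - k)]

/-- For `F = F_{2^n}` with `p = 2^n - 1` a Mersenne prime and `1 ≤ k < n`, there is a
nonzero divisor `f` of `X^p - 1` of degree `2^n - 2^{n-k}` with `wt(f) ≤ (n+1)^k` and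
`dim I_f = 2^{n-k} - 1 ≤ p/2^k`.  Consequently, if there are infinitely many Mersenne
primes then for every `δ > 0` there are a finite field `F` and a prime `p` with a
nonzero `f` of degree `< p` satisfying `wt(f) + dim I_f ≤ δp`. -/
theorem no_uniform_weak_uncertainty :
    (∀ n : ℕ, (2 ^ n - 1).Prime → ∀ k : ℕ, 1 ≤ k → k < n →
      ∃ f : Polynomial (GaloisField 2 n), f ≠ 0 ∧
        f.natDegree = 2 ^ n - 2 ^ (n - k) ∧
        f ∣ (X : Polynomial (GaloisField 2 n)) ^ (2 ^ n - 1) - 1 ∧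
        f.support.card ≤ (n + 1) ^ k ∧
        Module.finrank (GaloisField 2 n)
          (Ideal.span {Ideal.Quotient.mk
            (Ideal.span {(X : Polynomial (GaloisField 2 n)) ^ (2 ^ n - 1) - 1}) f})
          = 2 ^ (n - k) - 1 ∧
        2 ^ (n - k) - 1 ≤ (2 ^ n - 1) / 2 ^ k) ∧
    ((∀ N : ℕ, ∃ n : ℕ, N < n ∧ (2 ^ n - 1).Prime) →
      ∀ δ : ℝ, 0 < δ → ∃ n p : ℕ, p.Prime ∧ p = 2 ^ n - 1 ∧
        ∃ f : Polynomial (GaloisField 2 n), f ≠ 0 ∧ f.natDegree < p ∧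
          ((f.support.card : ℝ) +
            (Module.finrank (GaloisField 2 n)
              (Ideal.span {Ideal.Quotient.mk
                (Ideal.span {(X : Polynomial (GaloisField 2 n)) ^ p - 1}) f}) : ℝ))
            ≤ δ * p) := by
  refine ⟨fun n _ k _ hkn => ?_, fun hinf δ hδ => ?_⟩
  · obtain ⟨f, hf, hdeg, hdvd, hwt, hdim⟩ :=
      GaloisField.exists_sparse_dvd_X_pow_sub_one (by omega : n ≠ 0) hkn.le
    exact ⟨f, hf, hdeg, hdvd, hwt, hdim, Nat.two_pow_sub_sub_one_le_div hkn.le⟩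
  · obtain ⟨k, hk⟩ := exists_eventually_pow_add_two_pow_le hδ
    obtain ⟨N, hN⟩ := eventually_atTop.1 hk
    obtain ⟨n, hNn, hprime⟩ := hinf N
    obtain ⟨hkn, hbound⟩ := hN n hNn.le
    obtain ⟨f, hf, hdeg, -, hwt, hdim⟩ :=
      GaloisField.exists_sparse_dvd_X_pow_sub_one (by omega : n ≠ 0) hkn.le
    refine ⟨n, _, hprime, rfl, f, hf, ?_, ?_⟩
    · have h2 : 2 ≤ 2 ^ (n - k) := Nat.le_self_pow (by omega) 2
      have hn : 2 ^ (n - k) ≤ 2 ^ n := Nat.pow_le_pow_right two_pos (Nat.sub_le n k)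
      omega
    · rw [hdim]
      refine le_trans ?_ hbound
      have := Nat.one_le_two_pow (n := n - k)
      exact_mod_cast (by omega : #f.support + (2 ^ (n - k) - 1) ≤ (n + 1) ^ k + 2 ^ (n - k))
end

section
/- Let q < p be distinct primes, r = ord_p(q), F = F_q, E = F_{q^r}, and T = Σ_{i=0}^{r-1} X^{q^i} ∈ F[X] the trace polynomial. Then there exists α ∈ F_q such that the polynomial f = T + α vanishes at at least p/q of the p-th roots of unity in E; consequently wt(f) + dim_F(I_f) ≤ r + 1 + (1 - 1/q)p, so if r < p/q the uncertainty principle wt(f) + dim(I_f) ≥ p + 1 fails over E. -/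
/-!
For every `x ∈ E = 𝔽_{q^r}` one has `T(x) = Tr_{E/𝔽_q}(x) ∈ 𝔽_q`. Since `p ∣ q^r - 1`, the field `E`
contains all `p` of the `p`-th roots of unity, so by pigeonhole some fibre `Tr⁻¹(β)` contains a set
`S` of at least `p/q` of them, and `f = T - β` vanishes on `S`. Evaluation at the points of `S` is a
surjection `E[X]/(X^p - 1) → E^S` whose kernel contains the ideal `I_f`, hence
`dim I_f ≤ p - |S|`, while `f` has at most `r + 1` monomials.

For the last claim, reducing the exponents `q^i` modulo `p` gives a polynomial of degree `< p` with
the same values at the `p`-th roots of unity and at most `r + 1` monomials; it is nonzero because,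
`r` being the order of `q` modulo `p`, only `i = 0` yields the exponent `1`.
-/

open Polynomial Finset

section EvalOnRoots

variable {K : Type*} [Field K] {P : K[X]} {S : Finset K}

noncomputable def evalOnRoots (P : K[X]) (S : Finset K) (hS : ∀ x ∈ S, P.IsRoot x) :
    K[X] ⧸ Ideal.span {P} →ₐ[K] (S → K) :=
  Ideal.Quotient.liftₐ _ (AlgHom.pi fun x : S ↦ aeval (x : K)) fun g hg ↦ by
    obtain ⟨c, rfl⟩ := Ideal.mem_span_singleton'.mp hg
    funext x
    simp [(hS x x.2).eq_zero]

@[simp]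
theorem evalOnRoots_mk (hS : ∀ x ∈ S, P.IsRoot x) (g : K[X]) (x : S) :
    evalOnRoots P S hS (Ideal.Quotient.mk _ g) x = g.eval (x : K) :=
  rfl

theorem evalOnRoots_surjective (hS : ∀ x ∈ S, P.IsRoot x) :
    Function.Surjective (evalOnRoots P S hS) := by
  classical
  intro c
  refine ⟨Ideal.Quotient.mk _ (Lagrange.interpolate S id fun x ↦
    if h : x ∈ S then c ⟨x, h⟩ else 0), ?_⟩
  funext x
  rw [evalOnRoots_mk, ← id_eq (x : K),
    Lagrange.eval_interpolate_at_node _ Function.injective_id.injOn x.2]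
  simp

theorem finrank_span_mk_add_card_le (hP : P ≠ 0) (hS : ∀ x ∈ S, P.IsRoot x) {g : K[X]}
    (hg : ∀ x ∈ S, g.eval x = 0) :
    Module.finrank K (Ideal.span {Ideal.Quotient.mk (Ideal.span {P}) g}) + #S ≤ P.natDegree := by
  have : Module.Finite K (K[X] ⧸ Ideal.span {P}) := (AdjoinRoot.powerBasis hP).finite
  set ev := (evalOnRoots P S hS).toLinearMap
  have hspan_le : (Ideal.span {Ideal.Quotient.mk (Ideal.span {P}) g}).restrictScalars K ≤
      LinearMap.ker ev := by
    intro y hy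
    obtain ⟨z, rfl⟩ := Ideal.mem_span_singleton'.mp hy
    have hg' : evalOnRoots P S hS (Ideal.Quotient.mk _ g) = 0 := funext fun x ↦ hg x x.2
    simp [ev, hg']
  have hrange : Module.finrank K (LinearMap.range ev) = #S := by
    rw [LinearMap.range_eq_top.2 (evalOnRoots_surjective hS), finrank_top,
      Module.finrank_fintype_fun_eq_card, Fintype.card_coe]
  calc _ ≤ Module.finrank K (LinearMap.ker ev) + Module.finrank K (LinearMap.range ev) := by
        rw [hrange]
        exact Nat.add_le_add_right (Submodule.finrank_mono hspan_le) _
    _ = P.natDegree := by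
        rw [add_comm, LinearMap.finrank_range_add_finrank_ker, finrank_quotient_span_eq_natDegree]

end EvalOnRoots

section SparsePolynomial

variable {ι : Type*} (s : Finset ι) (e : ι → ℕ)

theorem card_support_sum_X_pow_add_C_le {R : Type*} [Semiring R] (a : R) :
    ((∑ i ∈ s, (X : R[X]) ^ e i) + C a).support.card ≤ #s + 1 := by
  classical
  have hsub : ((∑ i ∈ s, (X : R[X]) ^ e i) + C a).support ⊆ insert 0 (s.image e) := by
    intro k hk
    rw [Polynomial.mem_support_iff, coeff_add, finsetSum_coeff, coeff_C] at hk
    simp only [coeff_X_pow] at hk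
    rw [mem_insert, mem_image]
    by_contra! h
    refine hk ?_
    rw [if_neg h.1, add_zero]
    exact sum_eq_zero fun i hi ↦ if_neg fun hki ↦ h.2 i hi hki.symm
  calc _ ≤ #(insert 0 (s.image e)) := card_le_card hsub
    _ ≤ #(s.image e) + 1 := card_insert_le _ _
    _ ≤ #s + 1 := by gcongr; exact card_image_le

theorem natDegree_sum_X_pow_mod_add_C_lt {R : Type*} [Semiring R] (a : R) {n : ℕ} (hn : 0 < n) :
    ((∑ i ∈ s, (X : R[X]) ^ (e i % n)) + C a).natDegree < n := by
  refine lt_of_le_of_lt (natDegree_add_le_of_degree_le ?_ ?_) (Nat.sub_lt hn one_pos)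
  · refine natDegree_sum_le_of_forall_le _ _ fun i _ ↦ (natDegree_X_pow_le _).trans ?_
    have := Nat.mod_lt (e i) hn
    omega
  · simp

theorem eval_sum_X_pow_mod_add_C {R : Type*} [CommSemiring R] (a : R) {n : ℕ} {x : R}
    (hx : x ^ n = 1) :
    ((∑ i ∈ s, (X : R[X]) ^ (e i % n)) + C a).eval x =
      ((∑ i ∈ s, (X : R[X]) ^ e i) + C a).eval x := by
  simp only [eval_add, eval_finsetSum, eval_pow, eval_X, ← pow_eq_pow_mod _ hx]

theorem card_support_add_finrank_span_add_card_le {K : Type*} [Field K] (a : K) {n : ℕ}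
    (hn : 0 < n) {S : Finset K} (hS : ∀ x ∈ S, x ^ n = 1)
    (hf : ∀ x ∈ S, ((∑ i ∈ s, (X : K[X]) ^ e i) + C a).eval x = 0) :
    ((∑ i ∈ s, (X : K[X]) ^ e i) + C a).support.card +
        Module.finrank K (Ideal.span {Ideal.Quotient.mk (Ideal.span {(X : K[X]) ^ n - 1})
          ((∑ i ∈ s, (X : K[X]) ^ e i) + C a)}) + #S ≤ #s + 1 + n := by
  have hdeg : ((X : K[X]) ^ n - 1).natDegree = n := by
    simpa using natDegree_X_pow_sub_C (n := n) (r := (1 : K))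
  have hroots : ∀ x ∈ S, ((X : K[X]) ^ n - 1).IsRoot x := fun x hx ↦ by simp [hS x hx]
  have hdim := finrank_span_mk_add_card_le (ne_zero_of_natDegree_gt (hdeg ▸ hn)) hroots hf
  have hsupp := card_support_sum_X_pow_add_C_le s e a
  omega

end SparsePolynomial

theorem orderOf_natCast_pos {n q : ℕ} [NeZero n] (h : q.Coprime n) :
    0 < orderOf (q : ZMod n) := by
  rw [← ZMod.coe_unitOfCoprime q h, orderOf_units]
  exact orderOf_pos _

theorem dvd_pow_orderOf_natCast_sub_one {n q : ℕ} (hq : 0 < q) :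
    n ∣ q ^ orderOf (q : ZMod n) - 1 := by
  refine (Nat.modEq_iff_dvd' (Nat.one_le_pow _ _ hq)).1 ((ZMod.natCast_eq_natCast_iff _ _ _).1 ?_)
  rw [Nat.cast_pow, pow_orderOf_eq_one, Nat.cast_one]

theorem coeff_one_sum_X_pow_pow_mod_add_C {R : Type*} [Semiring R] {n q : ℕ} (hn : 1 < n)
    (hq : 0 < orderOf (q : ZMod n)) (a : R) :
    ((∑ i ∈ range (orderOf (q : ZMod n)), (X : R[X]) ^ (q ^ i % n)) + C a).coeff 1 = 1 := by
  rw [coeff_add, coeff_C, if_neg one_ne_zero, add_zero, finsetSum_coeff,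
    sum_eq_single_of_mem 0 (mem_range.2 hq), pow_zero, Nat.mod_eq_of_lt hn, coeff_X_pow_self]
  intro i hi hi0
  rw [coeff_X_pow, if_neg]
  intro h
  apply pow_ne_one_of_lt_orderOf hi0 (mem_range.1 hi)
  rw [← Nat.cast_pow, ← ZMod.natCast_mod, ← h, Nat.cast_one]

theorem exists_reduced_card_support_add_finrank_span_add_card_le {K : Type*} [Field K]
    {n q : ℕ} (hn : 1 < n) (hq : 0 < orderOf (q : ZMod n)) (a : K) {S : Finset K}
    (hS : ∀ x ∈ S, x ^ n = 1)
    (hf : ∀ x ∈ S, ((∑ i ∈ range (orderOf (q : ZMod n)), (X : K[X]) ^ q ^ i) + C a).eval x = 0) :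
    ∃ g : K[X], g ≠ 0 ∧ g.natDegree < n ∧
      g.support.card + Module.finrank K (Ideal.span {Ideal.Quotient.mk
        (Ideal.span {(X : K[X]) ^ n - 1}) g}) + #S ≤ orderOf (q : ZMod n) + 1 + n := by
  refine ⟨(∑ i ∈ range (orderOf (q : ZMod n)), (X : K[X]) ^ (q ^ i % n)) + C a, fun h ↦ ?_,
    natDegree_sum_X_pow_mod_add_C_lt _ _ a (by omega), ?_⟩
  · simpa [h] using coeff_one_sum_X_pow_pow_mod_add_C hn hq a
  · simpa using card_support_add_finrank_span_add_card_le _ _ a (by omega) hS fun x hx ↦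
      (eval_sum_X_pow_mod_add_C _ _ a (hS x hx)).trans (hf x hx)

theorem card_nthRootsFinset_one_of_dvd_card_sub_one {K : Type*} [Field K] [Fintype K] {p : ℕ}
    (hp : p.Prime) (hdvd : p ∣ Fintype.card K - 1) : #(nthRootsFinset p (1 : K)) = p := by
  classical
  have : Fact p.Prime := ⟨hp⟩
  obtain ⟨ζ, hζ⟩ := exists_prime_orderOf_dvd_card (G := Kˣ) p (Fintype.card_units (α := K) ▸ hdvd)
  rw [← hζ, ← orderOf_units]
  exact (IsPrimitiveRoot.orderOf _).card_nthRootsFinset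

theorem card_nthRootsFinset_galoisField {q r p : ℕ} [Fact q.Prime] (hp : p.Prime) (hr : r ≠ 0)
    (hdvd : p ∣ q ^ r - 1) : #(nthRootsFinset p (1 : GaloisField q r)) = p := by
  have : Fintype (GaloisField q r) := Fintype.ofFinite _
  refine card_nthRootsFinset_one_of_dvd_card_sub_one hp ?_
  rwa [← Nat.card_eq_fintype_card, GaloisField.card q r hr]

theorem exists_le_card_filter_eval_sum_X_pow_card_pow_add_C_eq_zero (K : Type*) {L : Type*}
    [Field K] [Field L] [Finite L] [Algebra K L] [DecidableEq L] (s : Finset L) :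
    ∃ a : K, (#s : ℝ) / Nat.card K ≤
      #{x ∈ s | ((∑ i ∈ range (Module.finrank K L), (X : L[X]) ^ (Nat.card K ^ i)) +
        C (algebraMap K L a)).eval x = 0} := by
  classical
  have := Finite.of_injective _ (FaithfulSMul.algebraMap_injective K L)
  have := Fintype.ofFinite K
  obtain ⟨b, -, hb⟩ := exists_le_card_fiber_of_nsmul_le_card_of_maps_to
    (s := s) (f := Algebra.trace K L) (fun _ _ ↦ mem_univ _) univ_nonempty
    (b := (#s : ℝ) / Nat.card K) (by
      rw [card_univ, nsmul_eq_mul, ← Nat.card_eq_fintype_card,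
        mul_div_cancel₀ _ (Nat.cast_ne_zero.2 Nat.card_pos.ne')])
  refine ⟨-b, hb.trans_eq ?_⟩
  congr 2
  refine filter_congr fun x _ ↦ ?_
  simp only [eval_add, eval_finsetSum, eval_pow, eval_X, eval_C]
  rw [← FiniteField.algebraMap_trace_eq_sum_pow, ← map_add, FaithfulSMul.algebraMap_eq_zero_iff,
    add_neg_eq_zero]

/-- Sudan's counterexample: for distinct primes `q < p`, `r = ord_p(q)` and `E = F_{q^r}`,
there is `α ∈ F_q` such that `f = T + α` (with `T = ∑_{i<r} X^{q^i}` the trace polynomial)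
vanishes at `≥ p/q` of the `p`-th roots of unity in `E`; hence
`wt(f) + dim I_f ≤ r + 1 + (1 - 1/q)p`, and if `r < p/q` the uncertainty principle
`wt(f) + dim I_f ≥ p + 1` fails over `E`. -/
theorem trace_counterexample (q p : ℕ) [Fact q.Prime] (hp : p.Prime) (hqp : q < p)
    (r : ℕ) (hr : r = orderOf ((q : ZMod p))) :
    ∃ α : ZMod q,
      ((p : ℝ) / q ≤
        ({μ : GaloisField q r | μ ^ p = 1 ∧
          ((∑ i ∈ Finset.range r, (X : Polynomial (GaloisField q r)) ^ (q ^ i)) +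
            C (algebraMap (ZMod q) (GaloisField q r) α)).eval μ = 0}).ncard) ∧
      (((((∑ i ∈ Finset.range r, (X : Polynomial (GaloisField q r)) ^ (q ^ i)) +
            C (algebraMap (ZMod q) (GaloisField q r) α)).support.card : ℝ) +
          (Module.finrank (GaloisField q r)
            (Ideal.span {Ideal.Quotient.mk
              (Ideal.span {(X : Polynomial (GaloisField q r)) ^ p - 1})
              ((∑ i ∈ Finset.range r, (X : Polynomial (GaloisField q r)) ^ (q ^ i)) +
                C (algebraMap (ZMod q) (GaloisField q r) α))}) : ℝ))
        ≤ r + 1 + (1 - 1 / (q : ℝ)) * p) ∧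
      ((r : ℝ) < (p : ℝ) / q →
        ∃ f : Polynomial (GaloisField q r), f ≠ 0 ∧ f.natDegree < p ∧
          ((f.support.card : ℝ) +
            (Module.finrank (GaloisField q r)
              (Ideal.span {Ideal.Quotient.mk
                (Ideal.span {(X : Polynomial (GaloisField q r)) ^ p - 1}) f}) : ℝ))
            < p + 1) := by
  classical
  have hq : q.Prime := Fact.out
  have : NeZero p := ⟨hp.ne_zero⟩
  have hr0 : 0 < r := hr ▸ orderOf_natCast_pos ((Nat.coprime_primes hq hp).2 hqp.ne)
  set E := GaloisField q r
  have hroots : #(nthRootsFinset p (1 : E)) = p :=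
    card_nthRootsFinset_galoisField hp hr0.ne' (hr ▸ dvd_pow_orderOf_natCast_sub_one hq.pos)
  obtain ⟨α, hα⟩ :=
    exists_le_card_filter_eval_sum_X_pow_card_pow_add_C_eq_zero (ZMod q) (nthRootsFinset p (1 : E))
  rw [GaloisField.finrank q hr0.ne', Nat.card_zmod, hroots] at hα
  set S := {x ∈ nthRootsFinset p (1 : E) | ((∑ i ∈ range r, (X : E[X]) ^ q ^ i) +
    C (algebraMap (ZMod q) E α)).eval x = 0}
  have hSroots : ∀ x ∈ S, x ^ p = 1 := fun x hx ↦
    (mem_nthRootsFinset hp.pos 1).1 (mem_filter.1 hx).1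
  have hSvan : ∀ x ∈ S, _ := fun x hx ↦ (mem_filter.1 hx).2
  refine ⟨α, ?_, ?_, fun hrp ↦ ?_⟩
  · refine hα.trans ?_
    rw [← Set.ncard_coe_finset S, Nat.cast_le]
    exact Set.ncard_le_ncard (fun x hx ↦ ⟨hSroots x hx, hSvan x hx⟩) (Set.toFinite _)
  · have hbound := card_support_add_finrank_span_add_card_le (range r) (q ^ ·)
      (algebraMap (ZMod q) E α) hp.pos hSroots hSvan
    rw [card_range] at hbound
    have : (1 - 1 / (q : ℝ)) * p = p - p / q := by field_simp
    rw [this]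
    have := (Nat.cast_le (α := ℝ)).2 hbound
    push_cast at this
    linarith
  · subst hr
    obtain ⟨f, hf0, hfdeg, hbound⟩ :=
      exists_reduced_card_support_add_finrank_span_add_card_le hp.one_lt hr0 _ hSroots hSvan
    refine ⟨f, hf0, hfdeg, ?_⟩
    have := (Nat.cast_le (α := ℝ)).2 hbound
    push_cast at this
    linarith
end
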